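/- arXiv:quant-ph/9702061 — 8 statements merged into one kernel-verified Lean document; each statement's English description precedes it below -/
import Mathlib

section
/- For every λ ∈ ℝ, every ψ ∈ L²(ℝ,ℂ) and every t ≥ 0, ‖U_t^{(α)} ψ − U_t ψ‖_{L²} → 0 as α → 0+. -/
open MeasureTheory Complex

/-- The Gaussian approximate identity `V_α(x) = (2πα)^{-1/2} e^{-x²/(2α)}`. -/
noncomputable def gaussV (α x : ℝ) : ℝ := (2 * Real.pi * α) ^ (-(1:ℝ)/2) * Real.exp (-x ^ 2 / (2 * α))

/-- The regularized evolution `(U_t^{(α)} ψ)(x) = ψ(x-t)·exp(iλ ∫_0^t V_α(x-t+τ) dτ)`. -/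
noncomputable def Ualpha (lam α t : ℝ) (ψ : ℝ → ℂ) : ℝ → ℂ := fun x =>
  ψ (x - t) * Complex.exp (Complex.I * lam * (∫ τ in (0:ℝ)..t, gaussV α (x - t + τ)))

/-- The limit evolution `(U_t ψ)(x) = ψ(x-t)·(1 + (e^{iλ} - 1)·𝟙_{[0,t)}(x))`. -/
noncomputable def Ulim (lam t : ℝ) (ψ : ℝ → ℂ) : ℝ → ℂ := fun x =>
  ψ (x - t) * (1 + (Complex.exp (Complex.I * lam) - 1) * (Set.Ico (0:ℝ) t).indicator 1 x)

/-! The phase `∫₀ᵗ V_α(x - t + τ) dτ = ∫_{x-t}^x V_α` equals `Φ(x/√α) - Φ((x-t)/√α)`, where `Φ` is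
the primitive of the standard Gaussian density vanishing at `0`. Since `Φ(±∞) = ±1/2`, the phase
tends to `𝟙_{[0,t)}(x)` for every `x ∉ {0, t}`, and `1 + (e^{iλ} - 1)𝟙 = e^{iλ𝟙}`. Hence
`U_t^{(α)}ψ - U_tψ` tends to `0` almost everywhere while staying below `2|ψ(· - t)| ∈ L²`, and
dominated convergence concludes. -/

open Filter Set Topology
open scoped ENNReal

theorem tendsto_eLpNorm_of_dominated {ι X E : Type*} [MeasurableSpace X] {μ : Measure X}
    [NormedAddCommGroup E] {p : ℝ≥0∞} {l : Filter ι} [l.IsCountablyGenerated]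
    {F : ι → X → E} {g : X → ℝ} (hp0 : p ≠ 0) (hp : p ≠ ∞)
    (hF_meas : ∀ᶠ i in l, AEStronglyMeasurable (F i) μ) (hg : MemLp g p μ)
    (h_bound : ∀ᶠ i in l, ∀ᵐ x ∂μ, ‖F i x‖ ≤ g x)
    (h_lim : ∀ᵐ x ∂μ, Tendsto (fun i => F i x) l (𝓝 0)) :
    Tendsto (fun i => eLpNorm (F i) p μ) l (𝓝 0) := by
  have hp_pos : 0 < p.toReal := ENNReal.toReal_pos hp0 hp
  suffices Tendsto (fun i => ∫⁻ x, ‖F i x‖ₑ ^ p.toReal ∂μ) l (𝓝 0) by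
    simp only [eLpNorm_eq_lintegral_rpow_enorm_toReal hp0 hp]
    simpa [Function.comp_def, ENNReal.zero_rpow_of_pos (inv_pos.2 hp_pos)] using
      (ENNReal.continuous_rpow_const (y := p.toReal⁻¹)).tendsto 0 |>.comp this
  simpa using tendsto_lintegral_filter_of_dominated_convergence' (f := fun _ => 0)
    (fun x => ‖g x‖ₑ ^ p.toReal)
    (hF_meas.mono fun i hi => hi.enorm.pow_const _)
    (h_bound.mono fun i hi => hi.mono fun x hx =>
      ENNReal.rpow_le_rpow (enorm_le_iff_norm_le.2 (hx.trans (Real.le_norm_self _))) hp_pos.le)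
    (lintegral_rpow_enorm_lt_top_of_eLpNorm_lt_top hp0 hp hg.2).ne
    (h_lim.mono fun x hx => by
      simpa [Function.comp_def, ENNReal.zero_rpow_of_pos hp_pos] using
        (ENNReal.continuous_rpow_const (y := p.toReal)).tendsto 0 |>.comp (by simpa using hx.enorm))

theorem continuous_gaussV (α : ℝ) : Continuous (gaussV α) := by
  unfold gaussV; fun_prop

theorem gaussV_neg (α x : ℝ) : gaussV α (-x) = gaussV α x := by
  simp [gaussV]

theorem gaussV_one_eq (x : ℝ) :
    gaussV 1 x = (√(2 * Real.pi))⁻¹ * Real.exp (-(1 / 2) * x ^ 2) := by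
  rw [gaussV, mul_one, Real.sqrt_eq_rpow, ← Real.rpow_neg (by positivity)]
  ring_nf

theorem integrable_gaussV_one : Integrable (gaussV 1) := by
  simp_rw [funext gaussV_one_eq]
  exact (integrable_exp_neg_mul_sq (by norm_num)).const_mul _

theorem integral_Ioi_gaussV_one : ∫ x in Ioi 0, gaussV 1 x = 1 / 2 := by
  simp_rw [gaussV_one_eq]
  rw [integral_const_mul, integral_gaussian_Ioi, div_div_eq_mul_div, div_one]
  field_simp

theorem gaussV_eq_inv_sqrt_mul {α : ℝ} (hα : 0 < α) (u : ℝ) :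
    gaussV α u = (√α)⁻¹ * gaussV 1 (u / √α) := by
  rw [gaussV, gaussV, Real.mul_rpow (by positivity) hα.le, div_pow, Real.sq_sqrt hα.le,
    Real.sqrt_eq_rpow α, ← Real.rpow_neg hα.le]
  ring_nf

noncomputable def gaussPrimitive (y : ℝ) : ℝ := ∫ v in (0:ℝ)..y, gaussV 1 v

theorem gaussPrimitive_neg (y : ℝ) : gaussPrimitive (-y) = -gaussPrimitive y := by
  have h := intervalIntegral.integral_comp_neg (a := 0) (b := y) (gaussV 1)
  simp only [gaussV_neg, neg_zero] at h
  rw [gaussPrimitive, gaussPrimitive, h, intervalIntegral.integral_symm]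

theorem tendsto_gaussPrimitive_atTop : Tendsto gaussPrimitive atTop (𝓝 (1 / 2)) := by
  have h := intervalIntegral_tendsto_integral_Ioi 0 integrable_gaussV_one.integrableOn tendsto_id
  rwa [integral_Ioi_gaussV_one] at h

theorem integral_gaussV_eq_sub {α : ℝ} (hα : 0 < α) (a b : ℝ) :
    ∫ u in a..b, gaussV α u = gaussPrimitive (b / √α) - gaussPrimitive (a / √α) := by
  have hs : √α ≠ 0 := (Real.sqrt_pos.2 hα).ne'
  simp_rw [gaussV_eq_inv_sqrt_mul hα, intervalIntegral.integral_const_mul,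
    intervalIntegral.integral_comp_div _ hs, smul_eq_mul, inv_mul_cancel_left₀ hs]
  exact (intervalIntegral.integral_interval_sub_left
    integrable_gaussV_one.intervalIntegrable integrable_gaussV_one.intervalIntegrable).symm

theorem tendsto_div_sqrt_atTop {y : ℝ} (hy : 0 < y) :
    Tendsto (fun α => y / √α) (𝓝[>] 0) atTop := by
  simpa [div_eq_mul_inv, Real.sqrt_inv] using
    (Real.tendsto_sqrt_atTop.comp tendsto_inv_nhdsGT_zero).const_mul_atTop hy

theorem tendsto_gaussPrimitive_div_sqrt {y : ℝ} (hy : y ≠ 0) :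
    Tendsto (fun α => gaussPrimitive (y / √α)) (𝓝[>] 0) (𝓝 (Real.sign y / 2)) := by
  rcases hy.lt_or_gt with hy | hy
  · have h := (tendsto_gaussPrimitive_atTop.comp (tendsto_div_sqrt_atTop (neg_pos.2 hy))).neg
    simpa [Function.comp_def, neg_div, gaussPrimitive_neg, Real.sign_of_neg hy] using h
  · rw [Real.sign_of_pos hy]
    exact tendsto_gaussPrimitive_atTop.comp (tendsto_div_sqrt_atTop hy)

theorem tendsto_integral_gaussV {a b : ℝ} (ha : a ≠ 0) (hb : b ≠ 0) :
    Tendsto (fun α => ∫ u in a..b, gaussV α u) (𝓝[>] 0)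
      (𝓝 ((Real.sign b - Real.sign a) / 2)) := by
  rw [sub_div]
  refine ((tendsto_gaussPrimitive_div_sqrt hb).sub (tendsto_gaussPrimitive_div_sqrt ha)).congr' ?_
  filter_upwards [self_mem_nhdsWithin] with α hα
  exact (integral_gaussV_eq_sub hα a b).symm

theorem sign_sub_sign_sub_div_two_eq_indicator {t x : ℝ} (ht : 0 ≤ t) (hx0 : x ≠ 0) (hxt : x ≠ t) :
    (Real.sign x - Real.sign (x - t)) / 2 = (Ico 0 t).indicator 1 x := by
  rcases hx0.lt_or_gt with hx | hx
  · rw [Real.sign_of_neg hx, Real.sign_of_neg (by linarith), indicator_of_notMem (by simp [hx])]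
    norm_num
  rcases hxt.lt_or_gt with hxt | hxt
  · rw [Real.sign_of_pos hx, Real.sign_of_neg (by linarith),
      indicator_of_mem (mem_Ico.2 ⟨hx.le, hxt⟩)]
    norm_num
  · rw [Real.sign_of_pos hx, Real.sign_of_pos (by linarith),
      indicator_of_notMem (by simp [hxt.le.not_gt])]
    norm_num

theorem tendsto_integral_gaussV_shift {t x : ℝ} (ht : 0 ≤ t) (hx0 : x ≠ 0) (hxt : x ≠ t) :
    Tendsto (fun α => ∫ τ in (0:ℝ)..t, gaussV α (x - t + τ)) (𝓝[>] 0)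
      (𝓝 ((Ico 0 t).indicator 1 x)) := by
  rw [← sign_sub_sign_sub_div_two_eq_indicator ht hx0 hxt]
  simpa [intervalIntegral.integral_comp_add_left] using
    tendsto_integral_gaussV (sub_ne_zero.2 hxt) hx0

theorem one_add_exp_sub_one_mul_indicator {X : Type*} (s : Set X) (z : ℂ) (x : X) :
    1 + (exp z - 1) * s.indicator 1 x = exp (z * (s.indicator 1 x : ℝ)) := by
  by_cases hx : x ∈ s <;> simp [hx]

theorem norm_exp_I_mul_ofReal_mul_ofReal (a b : ℝ) : ‖exp (I * a * b)‖ = 1 := by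
  simpa [mul_assoc] using norm_exp_I_mul_ofReal (a * b)

theorem Ualpha_sub_Ulim_apply (lam α t : ℝ) (ψ : ℝ → ℂ) (x : ℝ) :
    (Ualpha lam α t ψ - Ulim lam t ψ) x = ψ (x - t) *
      (exp (I * lam * ∫ τ in (0:ℝ)..t, gaussV α (x - t + τ)) -
        exp (I * lam * (Ico 0 t).indicator (1 : ℝ → ℝ) x)) := by
  rw [Pi.sub_apply, Ualpha, Ulim, one_add_exp_sub_one_mul_indicator, mul_sub]

theorem norm_Ualpha_sub_Ulim_apply_le (lam α t : ℝ) (ψ : ℝ → ℂ) (x : ℝ) :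
    ‖(Ualpha lam α t ψ - Ulim lam t ψ) x‖ ≤ 2 * ‖ψ (x - t)‖ := by
  rw [Ualpha_sub_Ulim_apply, norm_mul, mul_comm]
  gcongr
  refine (norm_sub_le _ _).trans_eq ?_
  rw [norm_exp_I_mul_ofReal_mul_ofReal, norm_exp_I_mul_ofReal_mul_ofReal, one_add_one_eq_two]

theorem aestronglyMeasurable_Ualpha_sub_Ulim (lam α t : ℝ) {ψ : ℝ → ℂ}
    (hψ : AEStronglyMeasurable ψ) :
    AEStronglyMeasurable (Ualpha lam α t ψ - Ulim lam t ψ) := by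
  have hphase : Continuous fun x => ∫ τ in (0:ℝ)..t, gaussV α (x - t + τ) :=
    intervalIntegral.continuous_parametric_intervalIntegral_of_continuous'
      (by have := continuous_gaussV α; fun_prop) 0 t
  rw [funext (Ualpha_sub_Ulim_apply lam α t ψ)]
  refine (hψ.comp_measurePreserving (measurePreserving_sub_right volume t)).mul ?_
  have hind : Measurable ((Ico 0 t).indicator (1 : ℝ → ℝ)) :=
    measurable_one.indicator measurableSet_Ico
  exact (Continuous.aestronglyMeasurable (by fun_prop)).sub
    (by fun_prop : Measurable _).aestronglyMeasurable

theorem tendsto_Ualpha_sub_Ulim_apply (lam : ℝ) (ψ : ℝ → ℂ) {t x : ℝ} (ht : 0 ≤ t)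
    (hx0 : x ≠ 0) (hxt : x ≠ t) :
    Tendsto (fun α => (Ualpha lam α t ψ - Ulim lam t ψ) x) (𝓝[>] 0) (𝓝 0) := by
  have hcont : Continuous fun r : ℝ =>
      ψ (x - t) * (exp (I * lam * r) - exp (I * lam * (Ico 0 t).indicator (1 : ℝ → ℝ) x)) := by
    fun_prop
  have h := (hcont.tendsto _).comp (tendsto_integral_gaussV_shift ht hx0 hxt)
  rw [sub_self, mul_zero] at h
  exact h.congr fun α => (Ualpha_sub_Ulim_apply lam α t ψ x).symm

/-- For every `λ ∈ ℝ`, `ψ ∈ L²(ℝ,ℂ)` and `t ≥ 0`,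
`‖U_t^{(α)} ψ − U_t ψ‖_{L²} → 0` as `α → 0+`. -/
theorem gaussian_phase_strong_limit (lam : ℝ) (ψ : Lp ℂ 2 (volume : Measure ℝ))
    (t : ℝ) (ht : 0 ≤ t) :
    Filter.Tendsto
      (fun α : ℝ => eLpNorm (Ualpha lam α t (ψ : ℝ → ℂ) - Ulim lam t (ψ : ℝ → ℂ)) 2 volume)
      (nhdsWithin 0 (Set.Ioi 0)) (nhds 0) := by
  have hψt : MemLp (fun x => ψ (x - t)) 2 :=
    (Lp.memLp ψ).comp_measurePreserving (measurePreserving_sub_right volume t)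
  have hae : ∀ᵐ x : ℝ, x ∉ ({0, t} : Set ℝ) :=
    measure_eq_zero_iff_ae_notMem.mp ((toFinite _).measure_zero _)
  refine tendsto_eLpNorm_of_dominated two_ne_zero ENNReal.ofNat_ne_top
    (.of_forall fun α => aestronglyMeasurable_Ualpha_sub_Ulim lam α t (Lp.aestronglyMeasurable ψ))
    (hψt.norm.const_mul 2)
    (.of_forall fun α => .of_forall fun x => norm_Ualpha_sub_Ulim_apply_le lam α t ψ x) ?_
  filter_upwards [hae] with x hx
  simp only [mem_insert_iff, mem_singleton_iff, not_or] at hx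
  exact tendsto_Ualpha_sub_Ulim_apply lam ψ ht hx.1 hx.2
end

section
/- For every λ ∈ ℝ the family (U_t)_{t ≥ 0} is a strongly continuous semigroup of unitary operators on L²(ℝ,ℂ): each U_t is a surjective linear isometry, U_{t+s} = U_t ∘ U_s for all t, s ≥ 0, and for each ψ ∈ L²(ℝ,ℂ) the map t ↦ U_t ψ is continuous from [0,∞) to L²(ℝ,ℂ). -/
open MeasureTheory Complex

/-!
`U_t` is translation by `t` followed by multiplication with the phase `m_t`, equal to `e^{iλ}` on
`[0, t)` and to `1` elsewhere. Both factors are unitary (the inverse of a unimodular multiplier is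
its conjugate), and the semigroup law is the cocycle identity `m_{t+s}(x) = m_t(x) m_s(x - t)`.
Translations are strongly continuous on `Lᵖ`, `p < ∞`, while `m_s` and `m_t` differ only on an
interval of length `|s - t|`, so `‖m_s ψ - m_t ψ‖ → 0` by the absolute continuity of `∫ ‖ψ‖ᵖ`;
since every operator involved is an isometry, the two continuity statements combine.
-/

open Filter Set Topology
open scoped ENNReal

namespace MeasureTheory

section Unimodular

variable {α E 𝕜 : Type*} [MeasurableSpace α] {μ : Measure α} [RCLike 𝕜]
  [NormedAddCommGroup E] [NormedSpace 𝕜 E] {p : ℝ≥0∞} {m : α → 𝕜}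

theorem eLpNorm_unimodular_smul (hu : ∀ x, ‖m x‖ = 1) (f : α → E) :
    eLpNorm (fun x => m x • f x) p μ = eLpNorm f p μ :=
  eLpNorm_congr_norm_ae (.of_forall fun x => by rw [norm_smul, hu, one_mul])

theorem MemLp.unimodular_smul (hm : AEStronglyMeasurable m μ) (hu : ∀ x, ‖m x‖ = 1)
    {f : α → E} (hf : MemLp f p μ) : MemLp (fun x => m x • f x) p μ :=
  ⟨hm.smul hf.1, by rw [eLpNorm_unimodular_smul hu]; exact hf.2⟩

namespace Lp

variable [Fact (1 ≤ p)]

noncomputable def unimodularSMulₗᵢ (hm : AEStronglyMeasurable m μ) (hu : ∀ x, ‖m x‖ = 1) :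
    Lp E p μ →ₗᵢ[𝕜] Lp E p μ where
  toFun f := ((Lp.memLp f).unimodular_smul hm hu).toLp _
  map_add' f g := by
    rw [← MemLp.toLp_add]
    refine MemLp.toLp_congr _ _ ?_
    filter_upwards [Lp.coeFn_add f g] with x hx
    simp only [hx, Pi.add_apply, smul_add]
  map_smul' c f := by
    rw [RingHom.id_apply, ← MemLp.toLp_const_smul]
    refine MemLp.toLp_congr _ _ ?_
    filter_upwards [Lp.coeFn_smul c f] with x hx
    simp [hx, smul_comm (m x) c]
  norm_map' f := by
    simp only [LinearMap.coe_mk, AddHom.coe_mk]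
    rw [Lp.norm_toLp, eLpNorm_unimodular_smul hu, Lp.norm_def]

variable (hm : AEStronglyMeasurable m μ) (hu : ∀ x, ‖m x‖ = 1)

theorem coeFn_unimodularSMulₗᵢ (f : Lp E p μ) :
    unimodularSMulₗᵢ hm hu f =ᵐ[μ] fun x => m x • f x :=
  MemLp.coeFn_toLp ((Lp.memLp f).unimodular_smul hm hu)

theorem unimodularSMulₗᵢ_surjective :
    Function.Surjective (unimodularSMulₗᵢ (E := E) (p := p) hm hu) := by
  have hm' : AEStronglyMeasurable (fun x => starRingEnd 𝕜 (m x)) μ :=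
    RCLike.continuous_conj.comp_aestronglyMeasurable hm
  have hu' : ∀ x, ‖starRingEnd 𝕜 (m x)‖ = 1 := fun x => by rw [RCLike.norm_conj, hu]
  intro f
  refine ⟨unimodularSMulₗᵢ hm' hu' f, Lp.ext ?_⟩
  filter_upwards [coeFn_unimodularSMulₗᵢ hm hu (unimodularSMulₗᵢ hm' hu' f),
    coeFn_unimodularSMulₗᵢ hm' hu' f] with x h₁ h₂
  rw [h₁, h₂, smul_smul, RCLike.mul_conj, hu, RCLike.ofReal_one, one_pow, one_smul]

noncomputable def unimodularSMulEquiv : Lp E p μ ≃ₗᵢ[𝕜] Lp E p μ :=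
  .ofSurjective _ (unimodularSMulₗᵢ_surjective hm hu)

theorem coeFn_unimodularSMulEquiv (f : Lp E p μ) :
    unimodularSMulEquiv hm hu f =ᵐ[μ] fun x => m x • f x :=
  coeFn_unimodularSMulₗᵢ hm hu f

theorem eLpNorm_unimodularSMulEquiv_sub_le {m' : α → 𝕜} (hm' : AEStronglyMeasurable m' μ)
    (hu' : ∀ x, ‖m' x‖ = 1) {S : Set α} (hS : ∀ x ∉ S, m x = m' x) (f : Lp E p μ) :
    eLpNorm (⇑(unimodularSMulEquiv hm hu f) - ⇑(unimodularSMulEquiv hm' hu' f)) p μ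
      ≤ 2 * eLpNorm (S.indicator f) p μ := by
  have h : ∀ᵐ x ∂μ, ‖(⇑(unimodularSMulEquiv hm hu f) - ⇑(unimodularSMulEquiv hm' hu' f)) x‖₊
      ≤ 2 * ‖S.indicator f x‖₊ := by
    filter_upwards [coeFn_unimodularSMulEquiv hm hu f, coeFn_unimodularSMulEquiv hm' hu' f]
      with x h h'
    rw [Pi.sub_apply, h, h', ← sub_smul]
    by_cases hx : x ∈ S
    · rw [indicator_of_mem hx, ← NNReal.coe_le_coe]
      push_cast
      rw [norm_smul]
      gcongr
      linarith [norm_sub_le (m x) (m' x), hu x, hu' x]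
    · simp [hS x hx]
  exact (eLpNorm_le_nnreal_smul_eLpNorm_of_ae_le_mul h p).trans_eq (by
    rw [ENNReal.smul_def, smul_eq_mul, ENNReal.coe_ofNat])

end Lp

end Unimodular

theorem MemLp.tendsto_eLpNorm_indicator {α E ι : Type*} [MeasurableSpace α] {μ : Measure α}
    [NormedAddCommGroup E] {p : ℝ≥0∞} (hp : 1 ≤ p) (hp_top : p ≠ ∞) {f : α → E}
    (hf : MemLp f p μ) {l : Filter ι} {S : ι → Set α} (hS : ∀ i, MeasurableSet (S i))
    (hμS : Tendsto (fun i => μ (S i)) l (𝓝 0)) :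
    Tendsto (fun i => eLpNorm ((S i).indicator f) p μ) l (𝓝 0) := by
  refine ENNReal.tendsto_nhds_zero.2 fun ε hε => ?_
  have hε' : 0 < (min ε 1).toReal := ENNReal.toReal_pos (by positivity) (by simp)
  obtain ⟨δ, hδ, hSδ⟩ := hf.eLpNorm_indicator_le hp hp_top hε'
  filter_upwards [ENNReal.tendsto_nhds_zero.1 hμS _ (ENNReal.ofReal_pos.2 hδ)] with i hi
  calc eLpNorm ((S i).indicator f) p μ ≤ ENNReal.ofReal (min ε 1).toReal := hSδ _ (hS i) hi
    _ ≤ ε := by rw [ENNReal.ofReal_toReal (by simp)]; exact min_le_left _ _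

end MeasureTheory

theorem Filter.Tendsto.apply_of_isometry {ι α β : Type*} [PseudoMetricSpace α]
    [PseudoMetricSpace β] {l : Filter ι} {A : ι → α → β} (hA : ∀ i, Isometry (A i)) {a : α}
    {b : β} (hAa : Tendsto (fun i => A i a) l (𝓝 b)) {x : ι → α} (hx : Tendsto x l (𝓝 a)) :
    Tendsto (fun i => A i (x i)) l (𝓝 b) := by
  rw [tendsto_iff_dist_tendsto_zero] at hAa hx ⊢
  refine squeeze_zero (fun _ => dist_nonneg) (fun i => ?_) (by simpa using hx.add hAa)
  calc dist (A i (x i)) b ≤ dist (A i (x i)) (A i a) + dist (A i a) b := dist_triangle _ _ _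
    _ = dist (x i) a + dist (A i a) b := by rw [(hA i).dist_eq]

section JumpEvolution

variable {E 𝕜 : Type*} [RCLike 𝕜] [NormedAddCommGroup E] [NormedSpace 𝕜 E] {p : ℝ≥0∞}
  [Fact (1 ≤ p)]

namespace MeasureTheory.Lp

variable (𝕜)

noncomputable def translateEquiv (t : ℝ) :
    Lp E p (volume : Measure ℝ) ≃ₗᵢ[𝕜] Lp E p (volume : Measure ℝ) :=
  { compMeasurePreservingₗᵢ 𝕜 (· - t) (measurePreserving_sub_right (volume : Measure ℝ) t) with
    invFun := compMeasurePreserving (· + t) (measurePreserving_add_right (volume : Measure ℝ) t)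
    left_inv := fun f => by
      change compMeasurePreserving _ _ (compMeasurePreserving _ _ f) = f
      rw [← compMeasurePreserving_comp_apply]
      convert compMeasurePreserving_id_apply f
      exact funext fun x => add_sub_cancel_right x t
    right_inv := fun f => by
      change compMeasurePreserving _ _ (compMeasurePreserving _ _ f) = f
      rw [← compMeasurePreserving_comp_apply]
      convert compMeasurePreserving_id_apply f
      exact funext fun x => sub_add_cancel x t }

theorem coeFn_translateEquiv (t : ℝ) (f : Lp E p (volume : Measure ℝ)) :
    translateEquiv 𝕜 t f =ᵐ[volume] fun x => f (x - t) :=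
  coeFn_compMeasurePreserving f _

theorem continuous_translateEquiv_apply (hp : p ≠ ∞) (f : Lp E p (volume : Measure ℝ)) :
    Continuous fun t => translateEquiv 𝕜 t f := by
  have hg : Continuous fun t : ℝ => (⟨(· - t), by fun_prop⟩ : C(ℝ, ℝ)) :=
    ContinuousMap.continuous_of_continuous_uncurry _ (continuous_snd.sub continuous_fst)
  exact continuous_const.compMeasurePreservingLp hg (fun t => measurePreserving_sub_right _ t) hp

end MeasureTheory.Lp

noncomputable def jumpPhase (u : 𝕜) (t x : ℝ) : 𝕜 := if x ∈ Ico 0 t then u else 1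

theorem measurable_jumpPhase (u : 𝕜) (t : ℝ) : Measurable (jumpPhase u t) :=
  Measurable.ite measurableSet_Ico measurable_const measurable_const

theorem norm_jumpPhase {u : 𝕜} (hu : ‖u‖ = 1) (t x : ℝ) : ‖jumpPhase u t x‖ = 1 := by
  unfold jumpPhase
  split_ifs <;> simp [hu]

theorem jumpPhase_add (u : 𝕜) {t s : ℝ} (ht : 0 ≤ t) (hs : 0 ≤ s) (x : ℝ) :
    jumpPhase u (t + s) x = jumpPhase u t x * jumpPhase u s (x - t) := by
  simp only [jumpPhase, mem_Ico]
  split_ifs <;> grind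

theorem jumpPhase_eq_of_notMem (u : 𝕜) {s t x : ℝ} (hx : x ∉ Ico (min s t) (max s t)) :
    jumpPhase u s x = jumpPhase u t x := by
  simp only [jumpPhase, mem_Ico] at hx ⊢
  split_ifs <;> grind

theorem jumpPhase_eq_one_add_mul_indicator (u : 𝕜) (t x : ℝ) :
    jumpPhase u t x = 1 + (u - 1) * (Ico 0 t).indicator 1 x := by
  unfold jumpPhase indicator
  split_ifs <;> simp

variable {u : 𝕜} (hu : ‖u‖ = 1)

open Lp

noncomputable def jumpPhaseSMul (t : ℝ) :
    Lp E p (volume : Measure ℝ) ≃ₗᵢ[𝕜] Lp E p (volume : Measure ℝ) :=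
  unimodularSMulEquiv (measurable_jumpPhase u t).aestronglyMeasurable (norm_jumpPhase hu t)

theorem coeFn_jumpPhaseSMul (t : ℝ) (f : Lp E p (volume : Measure ℝ)) :
    jumpPhaseSMul hu t f =ᵐ[volume] fun x => jumpPhase u t x • f x :=
  coeFn_unimodularSMulEquiv _ _ f

noncomputable def jumpEvolution (t : ℝ) :
    Lp E p (volume : Measure ℝ) ≃ₗᵢ[𝕜] Lp E p (volume : Measure ℝ) :=
  (translateEquiv 𝕜 t).trans (jumpPhaseSMul hu t)

theorem coeFn_jumpEvolution (t : ℝ) (f : Lp E p (volume : Measure ℝ)) :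
    jumpEvolution hu t f =ᵐ[volume] fun x => jumpPhase u t x • f (x - t) := by
  filter_upwards [coeFn_jumpPhaseSMul hu t (translateEquiv 𝕜 t f), coeFn_translateEquiv 𝕜 t f]
    with x h h'
  rw [jumpEvolution, LinearIsometryEquiv.trans_apply, h, h']

theorem jumpEvolution_add {t s : ℝ} (ht : 0 ≤ t) (hs : 0 ≤ s)
    (f : Lp E p (volume : Measure ℝ)) :
    jumpEvolution hu (t + s) f = jumpEvolution hu t (jumpEvolution hu s f) := by
  refine Lp.ext ?_
  have hshift := (measurePreserving_sub_right volume t).quasiMeasurePreserving.ae_eq_comp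
    (coeFn_jumpEvolution hu s f)
  filter_upwards [coeFn_jumpEvolution hu (t + s) f,
    coeFn_jumpEvolution hu t (jumpEvolution hu s f), hshift] with x h₁ h₂ h₃
  simp only [Function.comp_apply] at h₃
  rw [h₁, h₂, h₃, jumpPhase_add u ht hs, smul_smul, sub_sub]

theorem tendsto_jumpPhaseSMul (hp : p ≠ ∞) (f : Lp E p (volume : Measure ℝ)) (t : ℝ) :
    Tendsto (fun s => jumpPhaseSMul hu s f) (𝓝 t) (𝓝 (jumpPhaseSMul hu t f)) := by
  rw [tendsto_Lp_iff_tendsto_eLpNorm']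
  have hvol : Tendsto (fun s => volume (Ico (min s t) (max s t))) (𝓝 t) (𝓝 0) := by
    simp_rw [Real.volume_Ico, max_sub_min_eq_abs]
    have h : Continuous fun s : ℝ => ENNReal.ofReal |t - s| :=
      ENNReal.continuous_ofReal.comp (continuous_abs.comp (continuous_sub_left t))
    simpa using h.tendsto t
  have hind :=
    (Lp.memLp f).tendsto_eLpNorm_indicator Fact.out hp (fun _ => measurableSet_Ico) hvol
  refine tendsto_of_tendsto_of_tendsto_of_le_of_le tendsto_const_nhds
    (by simpa using ENNReal.Tendsto.const_mul (a := 2) hind (Or.inr ENNReal.ofNat_ne_top))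
    (fun _ => zero_le) fun s => ?_
  exact eLpNorm_unimodularSMulEquiv_sub_le _ _ _ _ (fun x hx => jumpPhase_eq_of_notMem u hx) f

theorem continuous_jumpEvolution_apply (hp : p ≠ ∞) (f : Lp E p (volume : Measure ℝ)) :
    Continuous fun t => jumpEvolution hu t f :=
  continuous_iff_continuousAt.2 fun t =>
    (tendsto_jumpPhaseSMul hu hp _ t).apply_of_isometry (fun s => (jumpPhaseSMul hu s).isometry)
      ((continuous_translateEquiv_apply 𝕜 hp f).tendsto t)

end JumpEvolution

/-- For every `λ ∈ ℝ`, the operators `(U_t ψ)(x) = ψ(x-t)·(1 + (e^{iλ}-1)·𝟙_{[0,t)}(x))`,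
`t ≥ 0`, form a strongly continuous semigroup of unitary (surjective isometric) operators
on `L²(ℝ,ℂ)`. -/
theorem limit_evolution_unitary_semigroup (lam : ℝ) :
    ∃ U : ℝ → (Lp ℂ 2 (volume : Measure ℝ) ≃ₗᵢ[ℂ] Lp ℂ 2 (volume : Measure ℝ)),
      (∀ t : ℝ, 0 ≤ t → ∀ ψ : Lp ℂ 2 (volume : Measure ℝ),
        (U t ψ : ℝ → ℂ) =ᵐ[volume] fun x =>
          (ψ : ℝ → ℂ) (x - t) *
            (1 + (Complex.exp (Complex.I * lam) - 1) * (Set.Ico (0:ℝ) t).indicator 1 x)) ∧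
      (∀ t s : ℝ, 0 ≤ t → 0 ≤ s → ∀ ψ : Lp ℂ 2 (volume : Measure ℝ),
        U (t + s) ψ = U t (U s ψ)) ∧
      (∀ ψ : Lp ℂ 2 (volume : Measure ℝ),
        ContinuousOn (fun t : ℝ => U t ψ) (Set.Ici 0)) := by
  have hu : ‖Complex.exp (Complex.I * lam)‖ = 1 := by
    rw [mul_comm]
    exact Complex.norm_exp_ofReal_mul_I lam
  refine ⟨jumpEvolution hu, fun t _ ψ => ?_, fun t s ht hs ψ => jumpEvolution_add hu ht hs ψ,
    fun ψ => (continuous_jumpEvolution_apply hu ENNReal.ofNat_ne_top ψ).continuousOn⟩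
  filter_upwards [coeFn_jumpEvolution hu t ψ] with x hx
  rw [hx, smul_eq_mul, mul_comm, jumpPhase_eq_one_add_mul_indicator]
end

section
/- For every λ ∈ ℝ, every μ > 0 and every ψ ∈ L²(ℝ,ℂ), the Bochner integral ∫_0^∞ e^{−μt} U_t ψ dt (taken in L²(ℝ,ℂ)) is represented almost everywhere by the function R_μψ(x) = ∫_0^∞ e^{−μt} ψ(x − t) dt + 𝟙_{(0,∞)}(x)·(e^{iλ} − 1)·e^{−μx}·∫_0^∞ e^{−μt} ψ(−t) dt. -/
/-!
Write `M` for multiplication by the unimodular phase `e^{iλ 𝟙_{[0,∞)}}` and `S_t` for translation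
by `t`. Then `U_t = M S_t M⁻¹` for `t ≥ 0`, so `t ↦ U_t ψ` is continuous with `‖U_t ψ‖ = ‖ψ‖` and
the `L²`-valued Bochner integral converges. Pairing it with indicators of sets of finite measure
and applying Fubini identifies it a.e. with the pointwise integral `∫_0^∞ e^{-μt} (U_t ψ)(x) dt`.
For `x > 0` the jump of `U_t ψ` contributes `(e^{iλ} - 1) ∫_x^∞ e^{-μt} ψ(x - t) dt`, which the
substitution `t = s + x` turns into the boundary term.
-/

open MeasureTheory Complex Set
open scoped ENNReal

namespace MeasureTheory.Lp

section Integral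

variable {α 𝕜 T : Type*} [MeasurableSpace α] [RCLike 𝕜] [MeasurableSpace T] {ν : Measure α}
  {ρ : Measure T}

theorem setIntegral_norm_le {E : Type*} [NormedAddCommGroup E] (g : Lp E 2 ν) {S : Set α}
    (hS : ν S ≠ ∞) : ∫ x in S, ‖g x‖ ∂ν ≤ ν.real S ^ (1 / 2 : ℝ) * ‖g‖ := by
  have hg := (Lp.aestronglyMeasurable g).restrict (s := S)
  have hHolder : eLpNorm g 1 (ν.restrict S) ≤ ν S ^ (1 / 2 : ℝ) * eLpNorm g 2 ν := by
    calc eLpNorm g 1 (ν.restrict S)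
        ≤ eLpNorm g 2 (ν.restrict S) *
            ν.restrict S univ ^ (1 / (1 : ℝ≥0∞).toReal - 1 / (2 : ℝ≥0∞).toReal) :=
          eLpNorm_le_eLpNorm_mul_rpow_measure_univ one_le_two hg
      _ ≤ ν S ^ (1 / 2 : ℝ) * eLpNorm g 2 ν := by
          rw [Measure.restrict_apply_univ, mul_comm,
            show 1 / (1 : ℝ≥0∞).toReal - 1 / (2 : ℝ≥0∞).toReal = 1 / 2 by norm_num]
          gcongr
          exact Measure.restrict_le_self
  rw [integral_norm_eq_lintegral_enorm hg, ← eLpNorm_one_eq_lintegral_enorm, Lp.norm_def,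
    Measure.real, ENNReal.toReal_rpow, ← ENNReal.toReal_mul]
  exact ENNReal.toReal_mono (by finiteness) hHolder

theorem integrable_prod_restrict_of_ae_eq [SFinite ν] [SFinite ρ] {F : T → Lp 𝕜 2 ν}
    (hF : Integrable F ρ) {f : T → α → 𝕜}
    (hf : AEStronglyMeasurable (Function.uncurry f) (ρ.prod ν)) (hFf : ∀ᵐ t ∂ρ, F t =ᵐ[ν] f t) {S : Set α} (hS : ν S ≠ ∞) :
    Integrable (Function.uncurry f) (ρ.prod (ν.restrict S)) := by
  have : Fact (ν S < ∞) := ⟨hS.lt_top⟩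
  have hfS : AEStronglyMeasurable (Function.uncurry f) (ρ.prod (ν.restrict S)) := by
    rw [← Measure.restrict_univ (μ := ρ), Measure.prod_restrict]
    exact hf.restrict
  refine (integrable_prod_iff hfS).2 ⟨hFf.mono fun t ht => ?_, ?_⟩
  · exact (((Lp.memLp (F t)).restrict S).integrable one_le_two).congr (ae_restrict_of_ae ht)
  · refine (hF.norm.const_mul (ν.real S ^ (1 / 2 : ℝ))).mono' hfS.norm.integral_prod_right'
      (hFf.mono fun t ht => ?_)
    rw [Real.norm_of_nonneg (integral_nonneg fun _ => norm_nonneg _)]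
    calc ∫ x in S, ‖f t x‖ ∂ν = ∫ x in S, ‖F t x‖ ∂ν :=
          integral_congr_ae (ae_restrict_of_ae (ht.mono fun x hx => congrArg norm hx.symm))
      _ ≤ ν.real S ^ (1 / 2 : ℝ) * ‖F t‖ := setIntegral_norm_le (F t) hS

theorem coeFn_integral_ae_eq [SigmaFinite ν] [SFinite ρ] {F : T → Lp 𝕜 2 ν} (hF : Integrable F ρ)
    {f : T → α → 𝕜} (hf : AEStronglyMeasurable (Function.uncurry f) (ρ.prod ν))
    (hFf : ∀ᵐ t ∂ρ, F t =ᵐ[ν] f t) :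
    ⇑(∫ t, F t ∂ρ) =ᵐ[ν] fun x => ∫ t, f t x ∂ρ := by
  have hprod : ∀ S, ν S < ∞ → Integrable (Function.uncurry f) (ρ.prod (ν.restrict S)) :=
    fun S hS => integrable_prod_restrict_of_ae_eq hF hf hFf hS.ne
  refine ae_eq_of_forall_setIntegral_eq_of_sigmaFinite (fun S _ hS => ?_) (fun S _ hS => ?_)
    (fun S hSm hS => ?_)
  · have : Fact (ν S < ∞) := ⟨hS⟩
    exact ((Lp.memLp _).restrict S).integrable one_le_two
  · exact (hprod S hS).integral_prod_right
  · calc ∫ x in S, (∫ t, F t ∂ρ) x ∂ν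
        = inner 𝕜 (indicatorConstLp 2 hSm hS.ne (1 : 𝕜)) (∫ t, F t ∂ρ) :=
          (L2.inner_indicatorConstLp_one hSm hS.ne _).symm
      _ = ∫ t, inner 𝕜 (indicatorConstLp 2 hSm hS.ne (1 : 𝕜)) (F t) ∂ρ :=
          (integral_inner hF _).symm
      _ = ∫ t, ∫ x in S, f t x ∂ν ∂ρ := by
          refine integral_congr_ae (hFf.mono fun t ht => ?_)
          exact (L2.inner_indicatorConstLp_one _ _ _).trans
            (integral_congr_ae (ae_restrict_of_ae ht))
      _ = ∫ x in S, ∫ t, f t x ∂ρ ∂ν := integral_integral_swap (hprod S hS)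

end Integral

section UnimodularSMul

variable {α 𝕜 E : Type*} [MeasurableSpace α] {μ : Measure α} {p : ℝ≥0∞} [NormedField 𝕜]
  [NormedAddCommGroup E] [NormedSpace 𝕜 E] {m : α → 𝕜}

theorem memLp_unimodular_smul (hm : AEStronglyMeasurable m μ) (hm1 : ∀ x, ‖m x‖ = 1)
    (f : Lp E p μ) : MemLp (fun x => m x • f x) p μ :=
  (memLp_congr_norm (hm.smul (Lp.aestronglyMeasurable f)) (Lp.aestronglyMeasurable f)
    (.of_forall fun x => by rw [Pi.smul_apply', norm_smul, hm1, one_mul])).2 (Lp.memLp f)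

noncomputable def unimodularSMul (hm : AEStronglyMeasurable m μ) (hm1 : ∀ x, ‖m x‖ = 1)
    (f : Lp E p μ) : Lp E p μ :=
  (memLp_unimodular_smul hm hm1 f).toLp _

variable (hm : AEStronglyMeasurable m μ) (hm1 : ∀ x, ‖m x‖ = 1)

theorem coeFn_unimodularSMul (f : Lp E p μ) :
    unimodularSMul hm hm1 f =ᵐ[μ] fun x => m x • f x :=
  MemLp.coeFn_toLp _

theorem isometry_unimodularSMul [Fact (1 ≤ p)] :
    Isometry (unimodularSMul (p := p) (E := E) hm hm1) := by
  refine Isometry.of_dist_eq fun f g => ?_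
  rw [Lp.dist_def, Lp.dist_def]
  congr 1
  refine eLpNorm_congr_norm_ae ?_
  filter_upwards [coeFn_unimodularSMul hm hm1 f, coeFn_unimodularSMul hm hm1 g] with x hf hg
  rw [Pi.sub_apply, Pi.sub_apply, hf, hg, ← smul_sub, norm_smul, hm1, one_mul]

theorem norm_unimodularSMul (f : Lp E p μ) : ‖unimodularSMul hm hm1 f‖ = ‖f‖ := by
  rw [Lp.norm_def, Lp.norm_def, eLpNorm_congr_ae (coeFn_unimodularSMul hm hm1 f)]
  exact congrArg _ <| eLpNorm_congr_norm_ae <| .of_forall fun x => by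
    rw [norm_smul, hm1, one_mul]

end UnimodularSMul

end MeasureTheory.Lp

noncomputable def phase (lam : ℝ) (x : ℝ) : ℂ := if 0 ≤ x then exp (I * lam) else 1

theorem measurable_phase (lam : ℝ) : Measurable (phase lam) :=
  Measurable.ite measurableSet_Ici measurable_const measurable_const

theorem norm_phase (lam x : ℝ) : ‖phase lam x‖ = 1 := by
  unfold phase
  split_ifs <;> simp [norm_exp]

theorem phase_mul_phase_neg_sub {t : ℝ} (ht : 0 ≤ t) (lam x : ℝ) :
    phase lam x * phase (-lam) (x - t) =
      1 + (exp (I * lam) - 1) * (Ico (0 : ℝ) t).indicator 1 x := by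
  rcases lt_or_ge x 0 with hx | hx
  · have hxt : x - t < 0 := by linarith
    simp [phase, hx.not_ge, hxt.not_ge]
  rcases lt_or_ge x t with hxt | hxt
  · simp [phase, hx, hxt, sub_nonneg.not.2 hxt.not_ge]
  · have hxt' : 0 ≤ x - t := sub_nonneg.2 hxt
    simp [phase, hx, hxt', hxt.not_gt, ← exp_add]

noncomputable def limitEvolution (lam t : ℝ) (ψ : Lp ℂ 2 (volume : Measure ℝ)) :
    Lp ℂ 2 (volume : Measure ℝ) :=
  Lp.unimodularSMul (measurable_phase lam).aestronglyMeasurable (norm_phase lam)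
    (Lp.compMeasurePreserving (fun x => x - t) (measurePreserving_sub_right volume t)
      (Lp.unimodularSMul (measurable_phase (-lam)).aestronglyMeasurable (norm_phase (-lam)) ψ))

theorem coeFn_limitEvolution (lam : ℝ) {t : ℝ} (ht : 0 ≤ t)
    (ψ : Lp ℂ 2 (volume : Measure ℝ)) :
    limitEvolution lam t ψ =ᵐ[volume] fun x =>
      ψ (x - t) * (1 + (exp (I * lam) - 1) * (Ico (0 : ℝ) t).indicator 1 x) := by
  have hshift := measurePreserving_sub_right volume t
  filter_upwards [Lp.coeFn_unimodularSMul (E := ℂ) (p := 2)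
      (measurable_phase lam).aestronglyMeasurable (norm_phase lam) _,
    Lp.coeFn_compMeasurePreserving (E := ℂ) (p := 2) _ hshift,
    hshift.quasiMeasurePreserving.ae_eq_comp (Lp.coeFn_unimodularSMul
      (measurable_phase (-lam)).aestronglyMeasurable (norm_phase (-lam)) ψ)] with x h₁ h₂ h₃
  simp only [Function.comp_apply] at h₂ h₃
  rw [limitEvolution, h₁, h₂, h₃, smul_eq_mul, smul_eq_mul, ← phase_mul_phase_neg_sub ht]
  ring

theorem continuous_limitEvolution (lam : ℝ) (ψ : Lp ℂ 2 (volume : Measure ℝ)) :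
    Continuous fun t => limitEvolution lam t ψ :=
  (Lp.isometry_unimodularSMul _ _).continuous.comp <| continuous_const.compMeasurePreservingLp
    (ContinuousMap.continuous_of_continuous_uncurry (fun t => ⟨fun x => x - t, by fun_prop⟩)
      (continuous_snd.sub continuous_fst))
    (fun t => measurePreserving_sub_right volume t) ENNReal.ofNat_ne_top

theorem norm_limitEvolution (lam t : ℝ) (ψ : Lp ℂ 2 (volume : Measure ℝ)) :
    ‖limitEvolution lam t ψ‖ = ‖ψ‖ := by
  rw [limitEvolution, Lp.norm_unimodularSMul, Lp.norm_compMeasurePreserving,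
    Lp.norm_unimodularSMul]

theorem measurable_evolution_integrand (lam μ : ℝ) {g : ℝ → ℂ} (hg : Measurable g) :
    Measurable (Function.uncurry fun t x => (Real.exp (-μ * t) : ℂ) *
      (g (x - t) * (1 + (exp (I * lam) - 1) * (Ico (0 : ℝ) t).indicator 1 x))) := by
  have hIco : Measurable fun p : ℝ × ℝ => (Ico (0 : ℝ) p.1).indicator (1 : ℝ → ℂ) p.2 := by
    simp only [indicator_apply, Pi.one_apply]
    exact Measurable.ite ((measurableSet_le measurable_const measurable_snd).inter
      (measurableSet_lt measurable_snd measurable_fst)) measurable_const measurable_const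
  unfold Function.uncurry
  fun_prop

theorem setIntegral_Ioi_comp_add_right {E : Type*} [NormedAddCommGroup E] [NormedSpace ℝ E]
    (g : ℝ → E) (a : ℝ) : ∫ t in Ioi a, g t = ∫ s in Ioi 0, g (s + a) := by
  rw [← integral_indicator measurableSet_Ioi, ← integral_indicator measurableSet_Ioi,
    ← integral_add_right_eq_self _ a]
  congr 1 with s
  simp [indicator_apply]

theorem integrableOn_Ioi_exp_mul_comp_sub {μ : ℝ} (hμ : 0 < μ)
    (ψ : Lp ℂ 2 (volume : Measure ℝ)) (x : ℝ) :
    IntegrableOn (fun t => (Real.exp (-μ * t) : ℂ) * ψ (x - t)) (Ioi 0) := by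
  have hexp : MemLp (fun t => (Real.exp (-μ * t) : ℂ)) 2 (volume.restrict (Ioi 0)) := by
    refine (memLp_two_iff_integrable_sq_norm (by fun_prop)).2 ?_
    have : (fun t => ‖(Real.exp (-μ * t) : ℂ)‖ ^ 2) = fun t => Real.exp (-(2 * μ) * t) := by
      ext t
      rw [norm_real, Real.norm_of_nonneg (Real.exp_pos _).le, ← Real.exp_nat_mul]
      ring_nf
    rw [this]
    exact exp_neg_integrableOn_Ioi 0 (by linarith)
  have hψ : MemLp (fun t => ψ (x - t)) 2 (volume.restrict (Ioi 0)) :=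
    ((Lp.memLp ψ).comp_measurePreserving (Measure.measurePreserving_sub_left volume x)).restrict _
  exact hexp.integrable_mul hψ

theorem setIntegral_Ioi_exp_mul_comp_sub (μ x : ℝ) (g : ℝ → ℂ) :
    ∫ t in Ioi x, (Real.exp (-μ * t) : ℂ) * g (x - t) =
      exp (-μ * x) * ∫ t in Ioi 0, (Real.exp (-μ * t) : ℂ) * g (-t) := by
  rw [setIntegral_Ioi_comp_add_right, ← integral_const_mul]
  congr 1 with s
  rw [sub_add_cancel_right, ofReal_exp, ofReal_exp, ← mul_assoc, ← exp_add]
  push_cast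
  ring_nf

theorem setIntegral_Ioi_exp_mul_evolution {μ x : ℝ} (hx : x ≠ 0) (lam : ℝ) {g : ℝ → ℂ}
    (hg : IntegrableOn (fun t => (Real.exp (-μ * t) : ℂ) * g (x - t)) (Ioi 0)) :
    ∫ t in Ioi 0, (Real.exp (-μ * t) : ℂ) *
        (g (x - t) * (1 + (exp (I * lam) - 1) * (Ico (0 : ℝ) t).indicator 1 x)) =
      (∫ t in Ioi 0, (Real.exp (-μ * t) : ℂ) * g (x - t)) +
        (Ioi (0 : ℝ)).indicator 1 x * (exp (I * lam) - 1) * exp (-μ * x) *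
          ∫ t in Ioi 0, (Real.exp (-μ * t) : ℂ) * g (-t) := by
  rcases hx.lt_or_gt with hx | hx
  · have hxt : ∀ t, x ∉ Ico (0 : ℝ) t := fun t h => hx.not_ge h.1
    simp [hxt, hx.not_gt]
  set h := fun t => (Real.exp (-μ * t) : ℂ) * g (x - t)
  have hsplit : ∀ t, (Real.exp (-μ * t) : ℂ) *
      (g (x - t) * (1 + (exp (I * lam) - 1) * (Ico (0 : ℝ) t).indicator 1 x)) =
      h t + (exp (I * lam) - 1) * (Ioi x).indicator h t := by
    intro t
    by_cases hxt : x < t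
    · rw [indicator_of_mem (mem_Ico.2 ⟨hx.le, hxt⟩), indicator_of_mem (mem_Ioi.2 hxt),
        Pi.one_apply]
      ring
    · simp [h, hxt]
  simp_rw [hsplit]
  rw [integral_add hg ((hg.indicator measurableSet_Ioi).const_mul _), integral_const_mul,
    setIntegral_indicator measurableSet_Ioi, Ioi_inter_Ioi, sup_of_le_right hx.le,
    setIntegral_Ioi_exp_mul_comp_sub, indicator_of_mem (mem_Ioi.2 hx), Pi.one_apply]
  ring

theorem integrableOn_exp_smul_limitEvolution (lam : ℝ) {μ : ℝ} (hμ : 0 < μ)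
    (ψ : Lp ℂ 2 (volume : Measure ℝ)) :
    IntegrableOn (fun t => Real.exp (-μ * t) • limitEvolution lam t ψ) (Ioi 0) := by
  refine ((exp_neg_integrableOn_Ioi 0 hμ).mul_const ‖ψ‖).mono'
    (((by fun_prop : Continuous fun t => Real.exp (-μ * t)).smul
      (continuous_limitEvolution lam ψ)).aestronglyMeasurable) (.of_forall fun t => ?_)
  rw [norm_smul, norm_limitEvolution, Real.norm_of_nonneg (Real.exp_pos _).le]

/-- For every `λ ∈ ℝ`, `μ > 0` and `ψ ∈ L²(ℝ,ℂ)`, the Bochner integral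
`∫_0^∞ e^{-μt} U_t ψ dt` (taken in `L²(ℝ,ℂ)`, where `U_t` is the limit evolution
`(U_t ψ)(x) = ψ(x-t)(1 + (e^{iλ}-1)𝟙_{[0,t)}(x))`) is represented almost everywhere by
`R_μψ(x) = ∫_0^∞ e^{-μt} ψ(x-t) dt
  + 𝟙_{(0,∞)}(x)·(e^{iλ}-1)·e^{-μx}·∫_0^∞ e^{-μt} ψ(-t) dt`. -/
theorem resolvent_representation (lam : ℝ)
    (U : ℝ → Lp ℂ 2 (volume : Measure ℝ) → Lp ℂ 2 (volume : Measure ℝ))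
    (hU : ∀ t : ℝ, 0 ≤ t → ∀ ψ : Lp ℂ 2 (volume : Measure ℝ),
      (U t ψ : ℝ → ℂ) =ᵐ[volume] fun x =>
        (ψ : ℝ → ℂ) (x - t) *
          (1 + (Complex.exp (Complex.I * lam) - 1) * (Set.Ico (0:ℝ) t).indicator 1 x))
    (μ : ℝ) (hμ : 0 < μ) (ψ : Lp ℂ 2 (volume : Measure ℝ)) :
    ((∫ t in Set.Ioi (0:ℝ), Real.exp (-μ * t) • U t ψ : Lp ℂ 2 (volume : Measure ℝ)) : ℝ → ℂ)
      =ᵐ[volume] fun x =>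
        (∫ t in Set.Ioi (0:ℝ), (Real.exp (-μ * t) : ℂ) * (ψ : ℝ → ℂ) (x - t)) +
          (Set.Ioi (0:ℝ)).indicator 1 x * (Complex.exp (Complex.I * lam) - 1) *
            Complex.exp (-(μ : ℂ) * x) *
            (∫ t in Set.Ioi (0:ℝ), (Real.exp (-μ * t) : ℂ) * (ψ : ℝ → ℂ) (-t)) := by
  have hUV : ∀ t ∈ Ioi (0 : ℝ), Real.exp (-μ * t) • U t ψ =
      Real.exp (-μ * t) • limitEvolution lam t ψ := fun t ht => by
    rw [Lp.ext ((hU t ht.le ψ).trans (coeFn_limitEvolution lam ht.le ψ).symm)]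
  rw [setIntegral_congr_fun measurableSet_Ioi hUV]
  refine (Lp.coeFn_integral_ae_eq (integrableOn_exp_smul_limitEvolution lam hμ ψ)
    (measurable_evolution_integrand lam μ
      (Lp.stronglyMeasurable ψ).measurable).aestronglyMeasurable ?_).trans ?_
  · filter_upwards [ae_restrict_mem measurableSet_Ioi] with t ht
    filter_upwards [Lp.coeFn_smul (Real.exp (-μ * t)) (limitEvolution lam t ψ),
      coeFn_limitEvolution lam ht.le ψ] with x h₁ h₂
    rw [h₁, Pi.smul_apply, h₂, real_smul]
  · filter_upwards [Measure.ae_ne volume 0] with x hx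
    exact setIntegral_Ioi_exp_mul_evolution hx lam (integrableOn_Ioi_exp_mul_comp_sub hμ ψ x)
end

section
/- For every λ ∈ ℝ, μ > 0 and ψ ∈ L²(ℝ,ℂ), the function F(x) = ∫_0^∞ e^{−μt} ψ(x − t) dt + 𝟙_{(0,∞)}(x)·(e^{iλ} − 1)·e^{−μx}·∫_0^∞ e^{−μt} ψ(−t) dt is continuous on ℝ \ {0}, its one-sided limits at 0 exist, and they satisfy the phase-jump relation lim_{x→0+} F(x) = e^{iλ}·lim_{x→0−} F(x). -/
open MeasureTheory Complex
open Set Filter Topology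

/-!
Substituting `s = x - t` turns the convolution term into `e^{-μx} ∫_{-∞}^x e^{μs} ψ(s) ds`;
by Cauchy–Schwarz `e^{μs} ψ(s)` is integrable on every half-line `(-∞, c]`, so this term `G` is
continuous on all of `ℝ`. Hence `F = G + 𝟙_{(0,∞)} K` with `K(x) = (e^{iλ} - 1) e^{-μx} G(0)`
continuous, and the jump of `F` at `0` is `K(0)`: `F(0+) = G(0) + K(0) = e^{iλ} G(0) = e^{iλ} F(0-)`.
-/

theorem integral_Ioi_comp_sub_left {E : Type*} [NormedAddCommGroup E] [NormedSpace ℝ E]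
    (g : ℝ → E) (x : ℝ) : ∫ t in Ioi 0, g (x - t) = ∫ s in Iio x, g s := by
  have := (volume.measurePreserving_sub_left x).setIntegral_preimage_emb
    (measurableEmbedding_subLeft x) g (Iio x)
  convert this using 2
  ext t; simp

theorem memLp_two_exp_mul_Iic {a : ℝ} (ha : 0 < a) (c : ℝ) :
    MemLp (fun s : ℝ => Complex.exp (a * s)) 2 (volume.restrict (Iic c)) := by
  rw [memLp_two_iff_integrable_sq_norm (by fun_prop)]
  have hsq : (fun s : ℝ => ‖Complex.exp (a * s)‖ ^ 2) = fun s => Real.exp (2 * a * s) := by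
    funext s
    rw [Complex.norm_exp, ← Real.exp_nat_mul]
    simp only [Complex.re_ofReal_mul, Complex.ofReal_re]
    ring_nf
  rw [hsq]
  exact integrableOn_exp_mul_Iic (mul_pos two_pos ha) c

theorem integrableOn_exp_mul_mul_Iic {f : ℝ → ℂ} (hf : MemLp f 2) {a : ℝ} (ha : 0 < a)
    (c : ℝ) : IntegrableOn (fun s : ℝ => Complex.exp (a * s) * f s) (Iic c) :=
  (memLp_two_exp_mul_Iic ha c).integrable_mul (hf.restrict _)

theorem continuous_integral_Iic {E : Type*} [NormedAddCommGroup E] [NormedSpace ℝ E]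
    {μ : Measure ℝ} [NullSingletonClass μ] {f : ℝ → E} (hf : ∀ c, IntegrableOn f (Iic c) μ) :
    Continuous fun x => ∫ s in Iic x, f s ∂μ :=
  continuous_iff_continuousAt.2 fun x =>
    ((hf (x + 1)).continuousOn_Iic_primitive_Iic x (by simp)).continuousAt
      (Iic_mem_nhds (by linarith))

theorem integral_Ioi_exp_mul_comp_sub (μ x : ℝ) (f : ℝ → ℂ) :
    ∫ t in Ioi 0, (Real.exp (-μ * t) : ℂ) * f (x - t) =
      Complex.exp (-μ * x) * ∫ s in Iic x, Complex.exp (μ * s) * f s := by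
  calc ∫ t in Ioi 0, (Real.exp (-μ * t) : ℂ) * f (x - t)
      = ∫ t in Ioi 0, Complex.exp (-μ * x) *
          (fun s : ℝ => Complex.exp (μ * s) * f s) (x - t) := by
        refine setIntegral_congr_fun measurableSet_Ioi fun t _ => ?_
        simp only [Complex.ofReal_exp, ← mul_assoc, ← Complex.exp_add]
        push_cast; ring_nf
    _ = _ := by
        rw [integral_const_mul,
          integral_Ioi_comp_sub_left (fun s : ℝ => Complex.exp (μ * s) * f s),
          integral_Iic_eq_integral_Iio]

/-- The resolvent of the unperturbed translation group (`λ = 0`). -/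
noncomputable def freeResolvent (μ : ℝ) (f : ℝ → ℂ) (x : ℝ) : ℂ :=
  ∫ t in Ioi 0, (Real.exp (-μ * t) : ℂ) * f (x - t)

theorem continuous_freeResolvent {μ : ℝ} (hμ : 0 < μ) {f : ℝ → ℂ} (hf : MemLp f 2) :
    Continuous (freeResolvent μ f) := by
  have hrepr : freeResolvent μ f =
      fun x : ℝ => Complex.exp (-μ * x) * ∫ s in Iic x, Complex.exp (μ * s) * f s :=
    funext fun x => integral_Ioi_exp_mul_comp_sub μ x f
  rw [hrepr]
  exact (by fun_prop : Continuous fun x : ℝ => Complex.exp (-μ * x)).mul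
    (continuous_integral_Iic (integrableOn_exp_mul_mul_Iic hf hμ))

section Jump

variable {E : Type*} [TopologicalSpace E] [AddMonoid E] {g k : ℝ → E}

theorem continuousOn_add_indicator_Ioi [ContinuousAdd E] (hg : Continuous g) (hk : Continuous k)
    (a : ℝ) :
    ContinuousOn (fun x => g x + (Ioi a).indicator k x) {x | x ≠ a} := by
  intro x hx
  refine ContinuousAt.continuousWithinAt ?_
  rcases lt_or_gt_of_ne hx with hlt | hgt
  · refine hg.continuousAt.congr ?_
    filter_upwards [Iio_mem_nhds hlt] with y hy
    simp [indicator_of_notMem (notMem_Ioi.2 (le_of_lt (mem_Iio.1 hy)))]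
  · refine (hg.add hk).continuousAt.congr ?_
    filter_upwards [Ioi_mem_nhds hgt] with y hy
    simp [indicator_of_mem hy]

theorem tendsto_add_indicator_Ioi_nhdsGT [ContinuousAdd E] (hg : Continuous g)
    (hk : Continuous k) (a : ℝ) :
    Tendsto (fun x => g x + (Ioi a).indicator k x) (𝓝[>] a) (𝓝 (g a + k a)) :=
  ((hg.add hk).tendsto a).mono_left nhdsWithin_le_nhds |>.congr' <|
    eventually_nhdsWithin_of_forall fun y hy => by simp [indicator_of_mem hy]

theorem tendsto_add_indicator_Ioi_nhdsLT (hg : Continuous g) (a : ℝ) :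
    Tendsto (fun x => g x + (Ioi a).indicator k x) (𝓝[<] a) (𝓝 (g a)) :=
  (hg.tendsto a).mono_left nhdsWithin_le_nhds |>.congr' <|
    eventually_nhdsWithin_of_forall fun y hy => by
      simp [indicator_of_notMem (notMem_Ioi.2 (le_of_lt (mem_Iio.1 hy)))]

end Jump

/-- For `λ ∈ ℝ`, `μ > 0` and `ψ ∈ L²(ℝ,ℂ)`, the explicit resolvent representative
`F(x) = ∫_0^∞ e^{-μt} ψ(x-t) dt + 𝟙_{(0,∞)}(x)(e^{iλ}-1)e^{-μx} ∫_0^∞ e^{-μt} ψ(-t) dt`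
is continuous on `ℝ \ {0}`, has one-sided limits at `0`, and these satisfy the
phase-jump relation `lim_{x→0+} F(x) = e^{iλ}·lim_{x→0-} F(x)`. -/
theorem resolvent_phase_jump (lam : ℝ) (μ : ℝ) (hμ : 0 < μ)
    (ψ : Lp ℂ 2 (volume : Measure ℝ)) :
    let F : ℝ → ℂ := fun x =>
      (∫ t in Set.Ioi (0:ℝ), (Real.exp (-μ * t) : ℂ) * (ψ : ℝ → ℂ) (x - t)) +
        (Set.Ioi (0:ℝ)).indicator 1 x * (Complex.exp (Complex.I * lam) - 1) *
          Complex.exp (-(μ : ℂ) * x) *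
          (∫ t in Set.Ioi (0:ℝ), (Real.exp (-μ * t) : ℂ) * (ψ : ℝ → ℂ) (-t))
    ContinuousOn F {x : ℝ | x ≠ 0} ∧
      ∃ Lplus Lminus : ℂ,
        Filter.Tendsto F (nhdsWithin 0 (Set.Ioi 0)) (nhds Lplus) ∧
        Filter.Tendsto F (nhdsWithin 0 (Set.Iio 0)) (nhds Lminus) ∧
        Lplus = Complex.exp (Complex.I * lam) * Lminus := by
  intro F
  set G := freeResolvent μ ψ
  set K : ℝ → ℂ := fun x => (Complex.exp (I * lam) - 1) * Complex.exp (-μ * x) * G 0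
  have hF : F = fun x => G x + (Ioi 0).indicator K x := by
    funext x
    by_cases hx : x ∈ Ioi (0 : ℝ) <;> simp [F, G, K, freeResolvent, hx, mul_assoc]
  have hG : Continuous G := continuous_freeResolvent hμ (Lp.memLp ψ)
  have hK : Continuous K := by fun_prop
  rw [hF]
  refine ⟨continuousOn_add_indicator_Ioi hG hK 0, _, _,
    tendsto_add_indicator_Ioi_nhdsGT hG hK 0, tendsto_add_indicator_Ioi_nhdsLT hG 0, ?_⟩
  simp only [K, ofReal_zero, mul_zero, exp_zero, mul_one]
  ring
end

section
/- Let λ ∈ ℝ. For every f ∈ L²(ℝ,ℂ) and every μ ∈ {1, −1} there exists ψ ∈ L²(ℝ,ℂ) that is locally absolutely continuous on (−∞,0) and on (0,∞), with ψ' ∈ L²(ℝ,ℂ), whose one-sided limits ψ(0±) exist and satisfy ψ(0+) = e^{iλ} ψ(0−), and such that i ψ'(x) + i μ ψ(x) = f(x) for almost every x ≠ 0. (This is the surjectivity of H ± i for the operator H = i d/dx with the phase-jump boundary condition, establishing its self-adjointness.) -/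
open MeasureTheory Complex Filter

namespace PhaseJumpAux

open Set Real
open scoped ENNReal NNReal

noncomputable def uu (f : ℝ → ℂ) : ℝ → ℂ := fun t => (Real.exp t : ℂ) * (-Complex.I * f t)
noncomputable def HH (f : ℝ → ℂ) : ℝ → ℂ := fun x => ∫ t in Iic x, uu f t
noncomputable def psi0 (f : ℝ → ℂ) : ℝ → ℂ := fun x => (Real.exp (-x) : ℂ) * HH f x

lemma memL2_intervalIntegrable {v : ℝ → ℂ} (h : MemLp v 2 (volume : Measure ℝ)) (a b : ℝ) :
    IntervalIntegrable v volume a b := by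
  rw [intervalIntegrable_iff]
  have h1 := h.restrict (μ := volume) (Set.uIoc a b)
  haveI : IsFiniteMeasure ((volume : Measure ℝ).restrict (Set.uIoc a b)) := by
    constructor
    rw [Measure.restrict_apply_univ, Set.uIoc, Real.volume_Ioc]
    exact ENNReal.ofReal_lt_top
  exact h1.integrable one_le_two

lemma uu_integrableOn {f : ℝ → ℂ} (hf : MemLp f 2 (volume : Measure ℝ)) (x : ℝ) :
    IntegrableOn (uu f) (Set.Iic x) volume := by
  have hg : MemLp (fun t => -Complex.I * f t) 2 ((volume : Measure ℝ).restrict (Set.Iic x)) :=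
    (hf.const_mul _).restrict _
  have hemeas : AEStronglyMeasurable (fun t : ℝ => (Real.exp t : ℂ))
      ((volume : Measure ℝ).restrict (Set.Iic x)) :=
    (Complex.continuous_ofReal.comp Real.continuous_exp).aestronglyMeasurable
  have he : MemLp (fun t : ℝ => (Real.exp t : ℂ)) 2 ((volume : Measure ℝ).restrict (Set.Iic x)) := by
    rw [memLp_two_iff_integrable_sq_norm hemeas]
    refine Integrable.mono' ((integrableOn_exp_Iic x).const_mul (Real.exp x)) ?_ ?_
    · exact (hemeas.norm.pow 2)
    · filter_upwards [ae_restrict_mem measurableSet_Iic] with t ht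
      have h1 : ‖(Real.exp t : ℂ)‖ = Real.exp t := by
        rw [Complex.norm_real, Real.norm_eq_abs, abs_of_pos (Real.exp_pos t)]
      rw [Real.norm_eq_abs, _root_.abs_of_nonneg (by positivity), h1, sq]
      exact mul_le_mul_of_nonneg_right (Real.exp_le_exp.2 ht) (Real.exp_pos t).le
  have := hg.smul (φ := fun t : ℝ => (Real.exp t : ℂ)) he
    (r := 1)
  rw [memLp_one_iff_integrable] at this
  exact this

lemma HH_sub {f : ℝ → ℂ} (hf : MemLp f 2 (volume : Measure ℝ)) (a b : ℝ) :
    HH f b - HH f a = ∫ t in a..b, uu f t :=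
  intervalIntegral.integral_Iic_sub_Iic (uu_integrableOn hf a) (uu_integrableOn hf b)

lemma uu_intervalIntegrable {f : ℝ → ℂ} (hf : MemLp f 2 (volume : Measure ℝ)) (a b : ℝ) :
    IntervalIntegrable (uu f) volume a b := by
  rw [intervalIntegrable_iff]
  refine (uu_integrableOn hf (max a b)).mono_set ?_
  rw [Set.uIoc]
  exact le_trans Set.Ioc_subset_Iic_self le_rfl

lemma HH_continuous {f : ℝ → ℂ} (hf : MemLp f 2 (volume : Measure ℝ)) :
    Continuous (HH f) := by
  have : HH f = fun x => HH f 0 + ∫ t in (0:ℝ)..x, uu f t := by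
    funext x
    rw [← HH_sub hf 0 x]; ring
  rw [this]
  exact continuous_const.add (intervalIntegral.continuous_primitive
    (fun a b => uu_intervalIntegrable hf a b) 0)

lemma psi0_continuous {f : ℝ → ℂ} (hf : MemLp f 2 (volume : Measure ℝ)) :
    Continuous (psi0 f) :=
  (Complex.continuous_ofReal.comp (Real.continuous_exp.comp continuous_neg)).mul
    (HH_continuous hf)

lemma psi0_ftc {f : ℝ → ℂ} (hfm : StronglyMeasurable f) (hf : MemLp f 2 (volume : Measure ℝ))
    (a b : ℝ) : psi0 f b - psi0 f a = ∫ x in a..b, (-Complex.I * f x - psi0 f x) := by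
  suffices h : ∀ a b : ℝ, a ≤ b →
      psi0 f b - psi0 f a = ∫ x in a..b, (-Complex.I * f x - psi0 f x) by
    rcases le_total a b with hab | hab
    · exact h a b hab
    · have h2 := h b a hab
      rw [intervalIntegral.integral_symm, ← h2]; ring
  clear a b
  intro a b hab
  set S : Set (ℝ × ℝ) := {q : ℝ × ℝ | q.2 ≤ q.1} with hS
  have hSmeas : MeasurableSet S := measurableSet_le measurable_snd measurable_fst
  set F : ℝ × ℝ → ℂ := S.indicator (fun q => (Real.exp (-q.1) : ℂ) * uu f q.2) with hF
  set ν := (volume : Measure ℝ).restrict (Set.Ioc a b) with hν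
  have husm : StronglyMeasurable (uu f) :=
    (Complex.continuous_ofReal.comp Real.continuous_exp).stronglyMeasurable.mul
      (hfm.const_mul _)
  have huint : IntegrableOn (uu f) (Set.Ioc a b) volume :=
    (uu_integrableOn hf b).mono_set Set.Ioc_subset_Iic_self
  have hgint : IntegrableOn (fun t => -Complex.I * f t) (Set.Ioc a b) volume := by
    have h3 := memL2_intervalIntegrable (hf.const_mul (-Complex.I)) a b
    rwa [intervalIntegrable_iff, Set.uIoc_of_le hab] at h3
  have hwcont : Continuous (fun s : ℝ => (Real.exp (-s) : ℂ)) :=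
    Complex.continuous_ofReal.comp (Real.continuous_exp.comp continuous_neg)
  have hwint : IntegrableOn (fun s : ℝ => Real.exp (-s)) (Set.Ioc a b) volume :=
    (Real.continuous_exp.comp continuous_neg).integrableOn_Ioc
  have hψint : IntegrableOn (psi0 f) (Set.Ioc a b) volume :=
    (psi0_continuous hf).integrableOn_Ioc
  have hFmeas : AEStronglyMeasurable F (ν.prod ν) :=
    (((hwcont.comp continuous_fst).stronglyMeasurable.mul
      (husm.comp_measurable measurable_snd)).indicator hSmeas).aestronglyMeasurable
  have hFint : Integrable F (ν.prod ν) := by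
    refine Integrable.mono' (g := fun p : ℝ × ℝ => Real.exp (-p.1) * ‖uu f p.2‖)
      (Integrable.mul_prod hwint huint.norm) hFmeas ?_
    refine Filter.Eventually.of_forall fun p => ?_
    refine (norm_indicator_le_norm_self _ _).trans ?_
    rw [norm_mul, Complex.norm_real, Real.norm_eq_abs, _root_.abs_of_pos (Real.exp_pos _)]
  have hswap : ∫ s, (∫ t, F (s, t) ∂ν) ∂ν = ∫ t, (∫ s, F (s, t) ∂ν) ∂ν :=
    integral_integral_swap (f := fun s t => F (s, t)) hFint
  have hw : ∀ c : ℝ, c ≤ b →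
      ∫ s in Set.Ioc c b, (Real.exp (-s) : ℂ) = ((Real.exp (-c) - Real.exp (-b) : ℝ) : ℂ) := by
    intro c hcb
    have h0 : ∫ s in Set.Ioc c b, (Real.exp (-s) : ℂ)
        = ((∫ s in Set.Ioc c b, Real.exp (-s) : ℝ) : ℂ) := integral_ofReal
    rw [h0]
    congr 1
    rw [← intervalIntegral.integral_of_le hcb,
      intervalIntegral.integral_comp_neg (fun x => Real.exp x), integral_exp]
  have hinner1 : ∀ s ∈ Set.Ioc a b, (∫ t, F (s, t) ∂ν) = (Real.exp (-s) : ℂ) * (HH f s - HH f a) := by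
    intro s hs
    have h1 : ∀ t, F (s, t) = (Set.Iic s).indicator (fun t => (Real.exp (-s) : ℂ) * uu f t) t := by
      intro t
      simp only [hF, Set.indicator_apply, hS, Set.mem_setOf_eq, Set.mem_Iic]
    calc ∫ t, F (s, t) ∂ν
        = ∫ t, (Set.Iic s).indicator (fun t => (Real.exp (-s) : ℂ) * uu f t) t ∂ν := by simp_rw [h1]
      _ = ∫ t in Set.Ioc a b ∩ Set.Iic s, (Real.exp (-s) : ℂ) * uu f t := by
          rw [hν, setIntegral_indicator measurableSet_Iic]
      _ = (Real.exp (-s) : ℂ) * ∫ t in Set.Ioc a s, uu f t := by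
          rw [Set.Ioc_inter_Iic, min_eq_right hs.2, integral_const_mul]
      _ = (Real.exp (-s) : ℂ) * (HH f s - HH f a) := by
          rw [← intervalIntegral.integral_of_le hs.1.le, ← HH_sub hf a s]
  have hinner2 : ∀ t ∈ Set.Ioc a b,
      (∫ s, F (s, t) ∂ν) = ((Real.exp (-t) - Real.exp (-b) : ℝ) : ℂ) * uu f t := by
    intro t ht
    have h1 : ∀ s, F (s, t) = (Set.Ici t).indicator (fun s => (Real.exp (-s) : ℂ) * uu f t) s := by
      intro s
      simp only [hF, Set.indicator_apply, hS, Set.mem_setOf_eq, Set.mem_Ici]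
    calc ∫ s, F (s, t) ∂ν
        = ∫ s, (Set.Ici t).indicator (fun s => (Real.exp (-s) : ℂ) * uu f t) s ∂ν := by simp_rw [h1]
      _ = ∫ s in Set.Ioc a b ∩ Set.Ici t, (Real.exp (-s) : ℂ) * uu f t := by
          rw [hν, setIntegral_indicator measurableSet_Ici]
      _ = ∫ s in Set.Ioc t b, (Real.exp (-s) : ℂ) * uu f t := by
          have h2 : Set.Ioc a b ∩ Set.Ici t = Set.Icc t b := by
            ext s
            constructor
            · rintro ⟨⟨_, h3⟩, h4⟩; exact ⟨h4, h3⟩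
            · rintro ⟨h3, h4⟩; exact ⟨⟨lt_of_lt_of_le ht.1 h3, h4⟩, h3⟩
          rw [h2, integral_Icc_eq_integral_Ioc]
      _ = ((Real.exp (-t) - Real.exp (-b) : ℝ) : ℂ) * uu f t := by
          rw [integral_mul_const, hw t ht.2]
  have hL : ∫ s, (∫ t, F (s, t) ∂ν) ∂ν
      = (∫ x in Set.Ioc a b, psi0 f x) - ((Real.exp (-a) - Real.exp (-b) : ℝ) : ℂ) * HH f a := by
    rw [hν] at hinner1 ⊢
    rw [setIntegral_congr_fun measurableSet_Ioc hinner1]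
    have h3 : ∀ s ∈ Set.Ioc a b, (Real.exp (-s) : ℂ) * (HH f s - HH f a)
        = psi0 f s - (fun s : ℝ => (Real.exp (-s) : ℂ) * HH f a) s := by
      intro s _
      simp only [psi0]
      ring
    rw [setIntegral_congr_fun measurableSet_Ioc h3,
      integral_sub (g := fun s : ℝ => (Real.exp (-s) : ℂ) * HH f a) hψint
        ((hwcont.mul continuous_const).integrableOn_Ioc),
      integral_mul_const, hw a hab]
  have hR : ∫ t, (∫ s, F (s, t) ∂ν) ∂ν
      = (∫ x in Set.Ioc a b, (-Complex.I * f x)) - (Real.exp (-b) : ℂ) * (HH f b - HH f a) := by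
    rw [hν] at hinner2 ⊢
    rw [setIntegral_congr_fun measurableSet_Ioc hinner2]
    have key : ∀ t ∈ Set.Ioc a b, ((Real.exp (-t) - Real.exp (-b) : ℝ) : ℂ) * uu f t
        = (fun t => -Complex.I * f t) t - (fun t => (Real.exp (-b) : ℂ) * uu f t) t := by
      intro t _
      have h2 : (Real.exp (-t) : ℂ) * uu f t = -Complex.I * f t := by
        show (Real.exp (-t) : ℂ) * ((Real.exp t : ℂ) * (-Complex.I * f t)) = -Complex.I * f t
        rw [← mul_assoc, ← Complex.ofReal_mul, ← Real.exp_add, neg_add_cancel, Real.exp_zero,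
          Complex.ofReal_one, one_mul]
      calc ((Real.exp (-t) - Real.exp (-b) : ℝ) : ℂ) * uu f t
          = (Real.exp (-t) : ℂ) * uu f t - (Real.exp (-b) : ℂ) * uu f t := by push_cast; ring
        _ = _ := by rw [h2]
    rw [setIntegral_congr_fun measurableSet_Ioc key,
      integral_sub hgint (huint.const_mul _)]
    congr 1
    rw [integral_const_mul]
    congr 1
    rw [HH_sub hf a b, intervalIntegral.integral_of_le hab]
  have hEq : (∫ x in Set.Ioc a b, psi0 f x) - ((Real.exp (-a) - Real.exp (-b) : ℝ) : ℂ) * HH f a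
      = (∫ x in Set.Ioc a b, (-Complex.I * f x)) - (Real.exp (-b) : ℂ) * (HH f b - HH f a) := by
    rw [← hL, ← hR, hswap]
  rw [intervalIntegral.integral_of_le hab, integral_sub hgint hψint]
  have hpa : psi0 f a = (Real.exp (-a) : ℂ) * HH f a := rfl
  have hpb : psi0 f b = (Real.exp (-b) : ℂ) * HH f b := rfl
  rw [hpa, hpb]
  rw [Complex.ofReal_sub] at hEq
  linear_combination hEq

lemma weight_lintegral_Iic (x : ℝ) :
    ∫⁻ t in Set.Iic x, ENNReal.ofReal (Real.exp (t - x)) = 1 := by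
  have hint : IntegrableOn (fun t : ℝ => Real.exp (t - x)) (Set.Iic x) volume := by
    have : (fun t : ℝ => Real.exp (t - x)) = fun t => Real.exp t * Real.exp (-x) := by
      funext t; rw [← Real.exp_add]; ring_nf
    rw [this]
    exact (integrableOn_exp_Iic x).mul_const _
  have hnn : 0 ≤ᵐ[(volume : Measure ℝ).restrict (Set.Iic x)] fun t => Real.exp (t - x) :=
    Filter.Eventually.of_forall fun t => (Real.exp_pos _).le
  rw [← ofReal_integral_eq_lintegral_ofReal hint hnn]
  have : ∫ t in Set.Iic x, Real.exp (t - x) = 1 := by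
    have h1 : (fun t : ℝ => Real.exp (t - x)) = fun t => Real.exp t * Real.exp (-x) := by
      funext t; rw [← Real.exp_add]; ring_nf
    rw [h1, integral_mul_const, integral_exp_Iic, ← Real.exp_add, add_neg_cancel, Real.exp_zero]
  rw [this, ENNReal.ofReal_one]

lemma weight_lintegral_Ici (t : ℝ) :
    ∫⁻ x in Set.Ici t, ENNReal.ofReal (Real.exp (t - x)) = 1 := by
  have hint : IntegrableOn (fun x : ℝ => Real.exp (t - x)) (Set.Ici t) volume := by
    rw [integrableOn_Ici_iff_integrableOn_Ioi]
    have h2 := (exp_neg_integrableOn_Ioi t one_pos).const_mul (Real.exp t)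
    refine h2.congr (Filter.Eventually.of_forall fun x => ?_)
    show Real.exp t * Real.exp (-1 * x) = Real.exp (t - x)
    rw [← Real.exp_add]; ring_nf
  have hnn : 0 ≤ᵐ[(volume : Measure ℝ).restrict (Set.Ici t)] fun x => Real.exp (t - x) :=
    Filter.Eventually.of_forall fun x => (Real.exp_pos _).le
  rw [← ofReal_integral_eq_lintegral_ofReal hint hnn]
  have : ∫ x in Set.Ici t, Real.exp (t - x) = 1 := by
    rw [integral_Ici_eq_integral_Ioi]
    have h1 : ∀ x : ℝ, Real.exp (t - x) = Real.exp t * Real.exp (-x) := by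
      intro x; rw [← Real.exp_add]; ring_nf
    rw [setIntegral_congr_fun measurableSet_Ioi fun x _ => h1 x, integral_const_mul,
      integral_exp_neg_Ioi, ← Real.exp_add, add_neg_cancel, Real.exp_zero]
  rw [this, ENNReal.ofReal_one]

lemma psi0_memL2 {f : ℝ → ℂ} (hfm : StronglyMeasurable f) (hf : MemLp f 2 (volume : Measure ℝ)) :
    MemLp (psi0 f) 2 (volume : Measure ℝ) := by
  set G : ℝ → ℝ≥0∞ := fun t => (‖f t‖₊ : ℝ≥0∞) with hG
  have hGm : Measurable G := hfm.measurable.nnnorm.coe_nnreal_ennreal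
  -- pointwise bound
  have hpt : ∀ x : ℝ, (‖psi0 f x‖₊ : ℝ≥0∞)
      ≤ ∫⁻ t in Set.Iic x, ENNReal.ofReal (Real.exp (t - x)) * G t := by
    intro x
    have hrepr : psi0 f x = ∫ t in Set.Iic x, (Real.exp (t - x) : ℂ) * (-Complex.I * f t) := by
      show (Real.exp (-x) : ℂ) * ∫ t in Set.Iic x, uu f t = _
      rw [← integral_const_mul]
      refine setIntegral_congr_fun measurableSet_Iic fun t _ => ?_
      show (Real.exp (-x) : ℂ) * ((Real.exp t : ℂ) * (-Complex.I * f t)) = _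
      rw [← mul_assoc, ← Complex.ofReal_mul, ← Real.exp_add]
      ring_nf
    rw [hrepr]
    refine (enorm_integral_le_lintegral_enorm _).trans_eq ?_
    refine lintegral_congr fun t => ?_
    change ((‖(Real.exp (t - x) : ℂ) * (-Complex.I * f t)‖₊ : ℝ≥0∞)) = _
    rw [nnnorm_mul, nnnorm_mul, ENNReal.coe_mul, ENNReal.coe_mul]
    have h1 : (‖(Real.exp (t - x) : ℂ)‖₊ : ℝ≥0∞) = ENNReal.ofReal (Real.exp (t - x)) := by
      rw [show ‖(Real.exp (t - x) : ℂ)‖₊ = ‖Real.exp (t - x)‖₊ from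
        NNReal.coe_injective (by simp only [coe_nnnorm, Complex.norm_real])]
      exact Real.enorm_eq_ofReal (Real.exp_pos _).le
    have h2 : (‖-Complex.I‖₊ : ℝ≥0∞) = 1 := by simp
    rw [h1, h2, one_mul]
  -- Cauchy-Schwarz
  have hCS : ∀ x : ℝ, (∫⁻ t in Set.Iic x, ENNReal.ofReal (Real.exp (t - x)) * G t) ^ (2:ℝ)
      ≤ ∫⁻ t in Set.Iic x, ENNReal.ofReal (Real.exp (t - x)) * G t ^ (2:ℝ) := by
    intro x
    set W : ℝ → ℝ≥0∞ := fun t => ENNReal.ofReal (Real.exp (t - x)) with hW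
    have hWm : Measurable W := by
      apply ENNReal.measurable_ofReal.comp
      exact (Real.continuous_exp.comp (continuous_id.sub continuous_const)).measurable
    have hconj : (2:ℝ).HolderConjugate 2 := Real.HolderConjugate.two_two
    have hhalf : ∀ t, W t ^ ((1:ℝ)/2) * (W t ^ ((1:ℝ)/2) * G t) = W t * G t := by
      intro t
      rw [← mul_assoc, ← ENNReal.rpow_add _ _ (by positivity) ENNReal.ofReal_ne_top]
      norm_num
      rfl
    have hH := ENNReal.lintegral_mul_le_Lp_mul_Lq ((volume : Measure ℝ).restrict (Set.Iic x))
      hconj (f := fun t => W t ^ ((1:ℝ)/2)) (g := fun t => W t ^ ((1:ℝ)/2) * G t)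
      ((hWm.pow_const _).aemeasurable) (((hWm.pow_const _).mul hGm).aemeasurable)
    have e1 : ∀ t, (W t ^ ((1:ℝ)/2)) ^ (2:ℝ) = W t := by
      intro t
      rw [← ENNReal.rpow_mul]
      norm_num
    have e2 : ∀ t, (W t ^ ((1:ℝ)/2) * G t) ^ (2:ℝ) = W t * G t ^ (2:ℝ) := by
      intro t
      rw [ENNReal.mul_rpow_of_nonneg _ _ (by norm_num), ← ENNReal.rpow_mul]
      norm_num
    simp only [Pi.mul_apply] at hH
    rw [lintegral_congr hhalf] at hH
    rw [lintegral_congr e1, lintegral_congr e2] at hH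
    rw [weight_lintegral_Iic x] at hH
    rw [ENNReal.one_rpow, one_mul] at hH
    calc (∫⁻ t in Set.Iic x, W t * G t) ^ (2:ℝ)
        ≤ ((∫⁻ t in Set.Iic x, W t * G t ^ (2:ℝ)) ^ ((1:ℝ)/2)) ^ (2:ℝ) :=
          ENNReal.rpow_le_rpow hH (by norm_num)
      _ = ∫⁻ t in Set.Iic x, W t * G t ^ (2:ℝ) := by
          rw [← ENNReal.rpow_mul]; norm_num
  -- Tonelli
  have hT : ∫⁻ x, ∫⁻ t in Set.Iic x, ENNReal.ofReal (Real.exp (t - x)) * G t ^ (2:ℝ) ∂volume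
      = ∫⁻ t, G t ^ (2:ℝ) ∂volume := by
    set k : ℝ → ℝ → ℝ≥0∞ := fun x t =>
      ({p : ℝ × ℝ | p.1 ≤ p.2}.indicator
        (fun p => ENNReal.ofReal (Real.exp (p.1 - p.2)) * G p.1 ^ (2:ℝ))) (t, x) with hk
    have hkm : AEMeasurable (Function.uncurry k) ((volume : Measure ℝ).prod volume) := by
      apply Measurable.aemeasurable
      have hm1 : Measurable (fun p : ℝ × ℝ => ENNReal.ofReal (Real.exp (p.1 - p.2)) * G p.1 ^ (2:ℝ)) := by
        apply Measurable.mul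
        · exact ENNReal.measurable_ofReal.comp
            (Real.continuous_exp.comp (continuous_fst.sub continuous_snd)).measurable
        · exact (hGm.comp measurable_fst).pow_const _
      have hm2 : Measurable ({p : ℝ × ℝ | p.1 ≤ p.2}.indicator
          (fun p => ENNReal.ofReal (Real.exp (p.1 - p.2)) * G p.1 ^ (2:ℝ))) :=
        hm1.indicator (measurableSet_le measurable_fst measurable_snd)
      exact hm2.comp (measurable_snd.prodMk measurable_fst)
    have hin : ∀ x, (∫⁻ t in Set.Iic x, ENNReal.ofReal (Real.exp (t - x)) * G t ^ (2:ℝ))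
        = ∫⁻ t, k x t ∂volume := by
      intro x
      rw [← lintegral_indicator measurableSet_Iic]
      refine lintegral_congr fun t => ?_
      rw [hk]
      simp only [Set.indicator_apply, Set.mem_Iic, Set.mem_setOf_eq]
    have hswap : ∫⁻ x, ∫⁻ t, k x t ∂volume ∂volume = ∫⁻ t, ∫⁻ x, k x t ∂volume ∂volume :=
      lintegral_lintegral_swap hkm
    have hout : ∀ t, (∫⁻ x, k x t ∂volume) = G t ^ (2:ℝ) := by
      intro t
      have h1 : ∀ x, k x t = (Set.Ici t).indicator
          (fun x => ENNReal.ofReal (Real.exp (t - x)) * G t ^ (2:ℝ)) x := by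
        intro x
        rw [hk]
        simp only [Set.indicator_apply, Set.mem_Ici, Set.mem_setOf_eq]
      rw [lintegral_congr h1, lintegral_indicator measurableSet_Ici,
        lintegral_mul_const' _ _ (by
          rw [hG]
          exact (ENNReal.rpow_lt_top_of_nonneg (by norm_num) ENNReal.coe_ne_top).ne),
        weight_lintegral_Ici t, one_mul]
    calc ∫⁻ x, ∫⁻ t in Set.Iic x, ENNReal.ofReal (Real.exp (t - x)) * G t ^ (2:ℝ) ∂volume
        = ∫⁻ x, ∫⁻ t, k x t ∂volume ∂volume := lintegral_congr fun x => hin x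
      _ = ∫⁻ t, ∫⁻ x, k x t ∂volume ∂volume := hswap
      _ = ∫⁻ t, G t ^ (2:ℝ) ∂volume := lintegral_congr fun t => hout t
  -- conclude
  have hGfin : ∫⁻ t, G t ^ (2:ℝ) ∂volume < ⊤ := by
    have h2 := hf.2
    rw [eLpNorm_eq_lintegral_rpow_enorm_toReal two_ne_zero ENNReal.ofNat_ne_top] at h2
    simp only [ENNReal.toReal_ofNat] at h2
    change (∫⁻ t, G t ^ (2:ℝ)) ^ (1 / (2:ℝ)) < ⊤ at h2
    by_contra hcon
    push_neg at hcon
    rw [top_le_iff.1 hcon] at h2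
    rw [ENNReal.top_rpow_of_pos (by norm_num)] at h2
    exact (lt_irrefl _ h2).elim
  constructor
  · exact (psi0_continuous hf).aestronglyMeasurable
  · rw [eLpNorm_eq_lintegral_rpow_enorm_toReal two_ne_zero ENNReal.ofNat_ne_top]
    simp only [ENNReal.toReal_ofNat]
    refine ENNReal.rpow_lt_top_of_nonneg (by norm_num) ?_
    refine (lt_of_le_of_lt ?_ (hT ▸ hGfin)).ne
    refine lintegral_mono fun x => ?_
    exact le_trans (ENNReal.rpow_le_rpow (hpt x) (by norm_num)) (hCS x)

lemma key (lam : ℝ) (f : ℝ → ℂ) (hfm : StronglyMeasurable f)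
    (hf : MemLp f 2 (volume : Measure ℝ)) :
    ∃ ψ ψ' : ℝ → ℂ,
      MemLp ψ 2 (volume : Measure ℝ) ∧
      MemLp ψ' 2 (volume : Measure ℝ) ∧
      (∀ a b : ℝ, (a < 0 ∧ b < 0) ∨ (0 < a ∧ 0 < b) →
        ψ b - ψ a = ∫ x in a..b, ψ' x) ∧
      (∃ ψplus ψminus : ℂ,
        Tendsto ψ (nhdsWithin 0 (Set.Ioi 0)) (nhds ψplus) ∧
        Tendsto ψ (nhdsWithin 0 (Set.Iio 0)) (nhds ψminus) ∧
        ψplus = Complex.exp (Complex.I * lam) * ψminus) ∧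
      (∀ x : ℝ, Complex.I * ψ' x + Complex.I * ψ x = f x) := by
  set c : ℂ := (Complex.exp (Complex.I * lam) - 1) * HH f 0 with hc
  set χ : ℝ → ℂ := Set.indicator (Set.Ioi 0) (fun x : ℝ => c * (Real.exp (-x) : ℂ)) with hχ
  set ψ : ℝ → ℂ := fun x => psi0 f x + χ x with hψ
  set ψ' : ℝ → ℂ := fun x => -Complex.I * f x - ψ x with hψ'
  have hχmem : MemLp χ 2 (volume : Measure ℝ) := by
    rw [hχ, memLp_indicator_iff_restrict measurableSet_Ioi]
    have hemeas : AEStronglyMeasurable (fun x : ℝ => (Real.exp (-x) : ℂ))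
        ((volume : Measure ℝ).restrict (Set.Ioi 0)) :=
      (Complex.continuous_ofReal.comp (Real.continuous_exp.comp continuous_neg)).aestronglyMeasurable
    have hexp : MemLp (fun x : ℝ => (Real.exp (-x) : ℂ)) 2
        ((volume : Measure ℝ).restrict (Set.Ioi 0)) := by
      rw [memLp_two_iff_integrable_sq_norm hemeas]
      have hdom : IntegrableOn (fun x : ℝ => Real.exp (-x)) (Set.Ioi 0) volume := by
        refine (exp_neg_integrableOn_Ioi 0 one_pos).congr
          (Filter.Eventually.of_forall fun x => ?_)
        norm_num
      refine Integrable.mono' hdom (hemeas.norm.pow 2) ?_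
      filter_upwards [ae_restrict_mem measurableSet_Ioi] with x hx
      have h1 : ‖(Real.exp (-x) : ℂ)‖ = Real.exp (-x) := by
        rw [Complex.norm_real, Real.norm_eq_abs, _root_.abs_of_pos (Real.exp_pos _)]
      rw [Real.norm_eq_abs, _root_.abs_of_nonneg (by positivity), h1, sq]
      have h2 : Real.exp (-x) ≤ 1 := Real.exp_le_one_iff.2 (by linarith [hx.out])
      nlinarith [Real.exp_pos (-x)]
    exact hexp.const_mul c
  have hψmem : MemLp ψ 2 (volume : Measure ℝ) := (psi0_memL2 hfm hf).add hχmem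
  have hψ'mem : MemLp ψ' 2 (volume : Measure ℝ) := (hf.const_mul _).sub hψmem
  have hode : ∀ x : ℝ, Complex.I * ψ' x + Complex.I * ψ x = f x := by
    intro x
    simp only [hψ']
    linear_combination (-(f x)) * Complex.I_mul_I
  have hexpftc : ∀ a b : ℝ, ∫ x in a..b, c * (Real.exp (-x) : ℂ)
      = c * ((Real.exp (-a) - Real.exp (-b) : ℝ) : ℂ) := by
    intro a b
    rw [intervalIntegral.integral_const_mul]
    congr 1
    have h0 : ∫ x in a..b, ((Real.exp (-x) : ℝ) : ℂ)
        = ((∫ x in a..b, Real.exp (-x) : ℝ) : ℂ) := intervalIntegral.integral_ofReal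
    rw [h0]
    congr 1
    rw [intervalIntegral.integral_comp_neg (fun x => Real.exp x), integral_exp]
  have hftc : ∀ a b : ℝ, (a < 0 ∧ b < 0) ∨ (0 < a ∧ 0 < b) →
      ψ b - ψ a = ∫ x in a..b, ψ' x := by
    rintro a b (⟨ha, hb⟩ | ⟨ha, hb⟩)
    · -- both negative
      have hsub : ∀ x ∈ Set.uIcc a b, ¬ (0 < x) := by
        intro x hx
        have := hx.2
        have hm : max a b < 0 := max_lt ha hb
        simp only [Set.uIcc, Set.mem_Icc] at hx
        push_neg
        exact le_of_lt (lt_of_le_of_lt hx.2 hm)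
      have hψeq : ∀ x ∈ Set.uIcc a b, ψ x = psi0 f x := by
        intro x hx
        have hnot : x ∉ Set.Ioi (0:ℝ) := fun h => hsub x hx h
        simp only [hψ, hχ]
        rw [Set.indicator_of_notMem hnot, add_zero]
      have hEqOn : Set.EqOn ψ' (fun x => -Complex.I * f x - psi0 f x) (Set.uIcc a b) := by
        intro x hx
        simp only [hψ']
        rw [hψeq x hx]
      rw [intervalIntegral.integral_congr hEqOn, ← psi0_ftc hfm hf a b,
        hψeq a Set.left_mem_uIcc, hψeq b Set.right_mem_uIcc]
    · -- both positive
      have hsub : ∀ x ∈ Set.uIcc a b, 0 < x := by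
        intro x hx
        simp only [Set.uIcc, Set.mem_Icc] at hx
        exact lt_of_lt_of_le (lt_min ha hb) hx.1
      have hψeq : ∀ x ∈ Set.uIcc a b, ψ x = psi0 f x + c * (Real.exp (-x) : ℂ) := by
        intro x hx
        simp only [hψ, hχ]
        rw [Set.indicator_of_mem (Set.mem_Ioi.2 (hsub x hx))]
      have hEqOn : Set.EqOn ψ'
          (fun x => (-Complex.I * f x - psi0 f x) - c * (Real.exp (-x) : ℂ)) (Set.uIcc a b) := by
        intro x hx
        simp only [hψ']
        rw [hψeq x hx]
        ring
      rw [intervalIntegral.integral_congr hEqOn,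
        intervalIntegral.integral_sub
          ((memL2_intervalIntegrable (hf.const_mul _) a b).sub
            ((psi0_continuous hf).intervalIntegrable a b))
          ((show Continuous (fun x : ℝ => c * (Real.exp (-x) : ℂ)) by fun_prop).intervalIntegrable a b),
        ← psi0_ftc hfm hf a b, hexpftc a b,
        hψeq a Set.left_mem_uIcc, hψeq b Set.right_mem_uIcc]
      push_cast
      ring
  refine ⟨ψ, ψ', hψmem, hψ'mem, hftc, ?_, hode⟩
  -- boundary limits
  have h00 : psi0 f 0 = HH f 0 := by
    simp only [psi0, neg_zero, Real.exp_zero, Complex.ofReal_one, one_mul]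
  refine ⟨Complex.exp (Complex.I * lam) * HH f 0, HH f 0, ?_, ?_, rfl⟩
  · -- limit from the right
    have hcont : Continuous (fun x : ℝ => psi0 f x + c * (Real.exp (-x) : ℂ)) :=
      (psi0_continuous hf).add (continuous_const.mul
        (Complex.continuous_ofReal.comp (Real.continuous_exp.comp continuous_neg)))
    have hval : psi0 f 0 + c * (Real.exp (-(0:ℝ)) : ℂ) = Complex.exp (Complex.I * lam) * HH f 0 := by
      rw [h00, hc]
      norm_num
      ring
    have ht : Tendsto (fun x : ℝ => psi0 f x + c * (Real.exp (-x) : ℂ))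
        (nhdsWithin 0 (Set.Ioi 0)) (nhds (Complex.exp (Complex.I * lam) * HH f 0)) := by
      rw [← hval]
      exact (hcont.tendsto 0).mono_left nhdsWithin_le_nhds
    refine ht.congr' ?_
    filter_upwards [self_mem_nhdsWithin] with x hx
    simp only [hψ, hχ]
    rw [Set.indicator_of_mem (hx : x ∈ Set.Ioi 0)]
  · -- limit from the left
    have ht : Tendsto (psi0 f) (nhdsWithin 0 (Set.Iio 0)) (nhds (HH f 0)) := by
      rw [← h00]
      exact ((psi0_continuous hf).tendsto 0).mono_left nhdsWithin_le_nhds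
    refine ht.congr' ?_
    filter_upwards [self_mem_nhdsWithin] with x hx
    have hnot : x ∉ Set.Ioi (0:ℝ) := fun h => absurd (Set.mem_Ioi.1 h) (not_lt.2 (le_of_lt hx))
    simp only [hψ, hχ]
    rw [Set.indicator_of_notMem hnot, add_zero]

end PhaseJumpAux


open PhaseJumpAux in
/-- Surjectivity of `H ± i` for the operator `H = i d/dx` with the phase-jump
boundary condition `ψ(0+) = e^{iλ}ψ(0-)`: for every `f ∈ L²(ℝ,ℂ)` and `μ ∈ {1,-1}`
there is `ψ` in the phase-jump domain (locally absolutely continuous on each half-line,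
with square-integrable derivative) such that `iψ' + iμψ = f` almost everywhere off `0`. -/
theorem phase_jump_selfadjoint_surjectivity (lam : ℝ) (f : ℝ → ℂ)
    (hf : MemLp f 2 (volume : Measure ℝ)) (μ : ℝ) (hμ : μ = 1 ∨ μ = -1) :
    ∃ ψ ψ' : ℝ → ℂ,
      MemLp ψ 2 (volume : Measure ℝ) ∧
      MemLp ψ' 2 (volume : Measure ℝ) ∧
      -- local absolute continuity on `(-∞,0)` and on `(0,∞)`,
      -- with derivative `ψ'`, in the integral (fundamental theorem of calculus) sense:
      (∀ a b : ℝ, (a < 0 ∧ b < 0) ∨ (0 < a ∧ 0 < b) →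
        ψ b - ψ a = ∫ x in a..b, ψ' x) ∧
      (∃ ψplus ψminus : ℂ,
        Tendsto ψ (nhdsWithin 0 (Set.Ioi 0)) (nhds ψplus) ∧
        Tendsto ψ (nhdsWithin 0 (Set.Iio 0)) (nhds ψminus) ∧
        ψplus = Complex.exp (Complex.I * lam) * ψminus) ∧
      (∀ᵐ x : ℝ ∂volume, x ≠ 0 →
        Complex.I * ψ' x + Complex.I * μ * ψ x = f x) := by
  obtain ⟨f₀, hf₀m, hff₀, hf₀⟩ : ∃ f₀ : ℝ → ℂ, StronglyMeasurable f₀ ∧ f =ᵐ[volume] f₀ ∧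
      MemLp f₀ 2 (volume : Measure ℝ) :=
    ⟨hf.1.mk f, hf.1.stronglyMeasurable_mk, hf.1.ae_eq_mk, hf.ae_eq hf.1.ae_eq_mk⟩
  rcases hμ with hμ | hμ
  · -- μ = 1
    obtain ⟨ψ, ψ', h1, h2, h3, h4, h5⟩ := key lam f₀ hf₀m hf₀
    refine ⟨ψ, ψ', h1, h2, h3, h4, ?_⟩
    filter_upwards [hff₀] with x hx _
    rw [hμ]
    simpa using (hx ▸ h5 x : _)
  · -- μ = -1 : reflect
    have hmp : MeasurePreserving (fun x : ℝ => -x) volume volume :=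
      Measure.measurePreserving_neg _
    set ftil : ℝ → ℂ := fun x => -f₀ (-x) with hftil
    have hftilm : StronglyMeasurable ftil :=
      (hf₀m.comp_measurable measurable_neg).neg
    have hftilmem : MemLp ftil 2 (volume : Measure ℝ) :=
      ((hf₀.comp_measurePreserving hmp :
        MemLp (f₀ ∘ fun x : ℝ => -x) 2 volume)).neg
    obtain ⟨φ, φ', h1, h2, h3, ⟨φp, φm, h4p, h4m, h4e⟩, h5⟩ := key (-lam) ftil hftilm hftilmem
    refine ⟨fun x => φ (-x), fun x => -φ' (-x), ?_, ?_, ?_, ?_, ?_⟩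
    · exact (h1.comp_measurePreserving hmp : MemLp (φ ∘ fun x : ℝ => -x) 2 volume)
    · exact ((h2.comp_measurePreserving hmp :
        MemLp (φ' ∘ fun x : ℝ => -x) 2 volume)).neg
    · rintro a b hab
      have hab' : (-a < 0 ∧ -b < 0) ∨ (0 < -a ∧ 0 < -b) := by
        rcases hab with ⟨ha, hb⟩ | ⟨ha, hb⟩
        · right; constructor <;> linarith
        · left; constructor <;> linarith
      have h := h3 (-a) (-b) hab'
      rw [h]
      rw [intervalIntegral.integral_neg, intervalIntegral.integral_comp_neg φ']
      rw [intervalIntegral.integral_symm]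
    · refine ⟨φm, φp, ?_, ?_, ?_⟩
      · have hneg : Tendsto (fun x : ℝ => -x) (nhdsWithin 0 (Set.Ioi 0))
            (nhdsWithin 0 (Set.Iio 0)) := by
          apply tendsto_nhdsWithin_of_tendsto_nhds_of_eventually_within
          · simpa using (continuous_neg.tendsto (0:ℝ)).mono_left nhdsWithin_le_nhds
          · filter_upwards [self_mem_nhdsWithin] with x hx
            simpa using (hx : (0:ℝ) < x)
        exact h4m.comp hneg
      · have hneg : Tendsto (fun x : ℝ => -x) (nhdsWithin 0 (Set.Iio 0))
            (nhdsWithin 0 (Set.Ioi 0)) := by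
          apply tendsto_nhdsWithin_of_tendsto_nhds_of_eventually_within
          · simpa using (continuous_neg.tendsto (0:ℝ)).mono_left nhdsWithin_le_nhds
          · filter_upwards [self_mem_nhdsWithin] with x hx
            simpa using (hx : x < (0:ℝ))
        exact h4p.comp hneg
      · rw [h4e, ← mul_assoc, ← Complex.exp_add]
        push_cast
        ring_nf
        rw [Complex.exp_zero, one_mul]
    · have hae : ∀ᵐ x : ℝ ∂volume, f x = f₀ x := hff₀
      filter_upwards [hae] with x hx _
      have h := h5 (-x)
      rw [hftil] at h
      simp only [neg_neg] at h
      rw [hμ, hx]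
      push_cast
      linear_combination -h
end

section
/- Let λ ∈ ℝ, let a : [0,∞) → ℂ be bounded and continuous and b, c : [0,∞) → ℂ be bounded and measurable, and suppose that ∫_0^t a(s) ds = ∫_0^t b(s) ds + iλ ∫_0^t (∫_0^{t−s} c(r) dr)·a(s) ds for all t ≥ 0. Then for every p ∈ ℂ with Re p > 0 such that iλ·ĉ(p) ≠ 1, the Laplace transforms satisfy â(p) = b̂(p)/(1 − iλ·ĉ(p)), where x̂(p) = ∫_0^∞ e^{−pt} x(t) dt. -/
/-! Under the Laplace transform a primitive `∫₀ᵗ f` becomes `f̂(p) / p` and the forward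
convolution `∫₀ᵗ K(t - s) a(s) ds` becomes `â(p) K̂(p)` (`integral_posConvolution`). With `K` the
primitive of `c`, the equation therefore transforms into `â/p = b̂/p + iλ â ĉ/p`, which is solved
for `â`. -/

open MeasureTheory Complex Set

noncomputable def laplaceTransform (f : ℝ → ℂ) (p : ℂ) : ℂ :=
  ∫ s in Ioi (0 : ℝ), cexp (-(p * s)) * f s

def LaplaceIntegrable (f : ℝ → ℂ) (p : ℂ) : Prop :=
  IntegrableOn (fun s : ℝ => cexp (-(p * s)) * f s) (Ioi 0)

section Laplace

variable {f g : ℝ → ℂ} {p : ℂ}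

lemma LaplaceIntegrable.of_norm_le {C : ℝ} (hp : 0 < p.re)
    (hf : AEStronglyMeasurable f (volume.restrict (Ioi 0))) (hfC : ∀ t, 0 < t → ‖f t‖ ≤ C) :
    LaplaceIntegrable f p := by
  refine ((exp_neg_integrableOn_Ioi 0 hp).const_mul C).mono'
    ((by fun_prop : Continuous fun s : ℝ => cexp (-(p * s))).aestronglyMeasurable.mul hf) ?_
  filter_upwards [self_mem_ae_restrict measurableSet_Ioi] with t ht
  rw [norm_mul, Complex.norm_exp, mul_comm]
  simpa using mul_le_mul_of_nonneg_right (hfC t ht) (Real.exp_pos _).le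

lemma LaplaceIntegrable.const_mul (hf : LaplaceIntegrable f p) (k : ℂ) :
    LaplaceIntegrable (fun x => k * f x) p := by
  unfold LaplaceIntegrable at *
  simp only [mul_left_comm _ k]
  exact hf.const_mul k

lemma laplaceTransform_congr (h : ∀ x, 0 < x → f x = g x) :
    laplaceTransform f p = laplaceTransform g p :=
  setIntegral_congr_fun measurableSet_Ioi fun x hx => by rw [h x hx]

lemma laplaceTransform_add (hf : LaplaceIntegrable f p) (hg : LaplaceIntegrable g p) :
    laplaceTransform (f + g) p = laplaceTransform f p + laplaceTransform g p := by
  simp only [laplaceTransform, Pi.add_apply, mul_add]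
  exact integral_add hf hg

lemma laplaceTransform_const_mul (k : ℂ) :
    laplaceTransform (fun x => k * f x) p = k * laplaceTransform f p := by
  simp only [laplaceTransform, mul_left_comm _ k]
  exact integral_const_mul k _

lemma laplaceIntegrable_one (hp : 0 < p.re) : LaplaceIntegrable 1 p := by
  simpa [LaplaceIntegrable, ← neg_mul] using integrableOn_exp_mul_complex_Ioi (a := -p) (by simpa) 0

lemma laplaceTransform_one (hp : 0 < p.re) : laplaceTransform 1 p = p⁻¹ := by
  simp only [laplaceTransform, Pi.one_apply, mul_one, ← neg_mul]
  rw [integral_exp_mul_complex_Ioi (by simpa using hp)]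
  simp

/-- `e^{-px} = e^{-pt} e^{-p(x-t)}` distributes the Laplace kernel over a convolution. -/
lemma cexp_neg_mul_intervalIntegral_conv (f g : ℝ → ℂ) (p : ℂ) (x : ℝ) :
    cexp (-(p * x)) * ∫ t in 0..x, g (x - t) * f t =
      ∫ t in 0..x, (cexp (-(p * t)) * f t) * (cexp (-(p * ↑(x - t))) * g (x - t)) := by
  rw [← intervalIntegral.integral_const_mul]
  refine intervalIntegral.integral_congr fun t _ => ?_
  rw [mul_mul_mul_comm, ← Complex.exp_add]
  push_cast
  ring_nf

lemma LaplaceIntegrable.posConvolution (hf : LaplaceIntegrable f p) (hg : LaplaceIntegrable g p) :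
    LaplaceIntegrable (fun x => ∫ t in 0..x, g (x - t) * f t) p := by
  have h := integrable_posConvolution hf hg (ContinuousLinearMap.mul ℝ ℂ)
  rw [MeasureTheory.posConvolution, integrable_indicator_iff measurableSet_Ioi] at h
  refine h.congr_fun (fun x _ => ?_) measurableSet_Ioi
  simp only [ContinuousLinearMap.mul_apply', cexp_neg_mul_intervalIntegral_conv]

lemma laplaceTransform_posConvolution (hf : LaplaceIntegrable f p) (hg : LaplaceIntegrable g p) :
    laplaceTransform (fun x => ∫ t in 0..x, g (x - t) * f t) p =
      laplaceTransform f p * laplaceTransform g p := by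
  have h := integral_posConvolution hf hg (ContinuousLinearMap.mul ℝ ℂ)
  simp only [ContinuousLinearMap.mul_apply'] at h
  rw [laplaceTransform, laplaceTransform, laplaceTransform, ← h]
  simp only [cexp_neg_mul_intervalIntegral_conv]

lemma LaplaceIntegrable.primitive (hp : 0 < p.re) (hf : LaplaceIntegrable f p) :
    LaplaceIntegrable (fun x => ∫ t in 0..x, f t) p := by
  simpa using hf.posConvolution (laplaceIntegrable_one hp)

lemma laplaceTransform_primitive (hp : 0 < p.re) (hf : LaplaceIntegrable f p) :
    laplaceTransform (fun x => ∫ t in 0..x, f t) p = laplaceTransform f p / p := by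
  simpa [laplaceTransform_one hp, div_eq_mul_inv] using
    laplaceTransform_posConvolution hf (laplaceIntegrable_one hp)

end Laplace

/-- If a bounded continuous `a` satisfies the Volterra convolution equation
`∫_0^t a = ∫_0^t b + iλ ∫_0^t (∫_0^{t-s} c) a(s) ds` for all `t ≥ 0`, then for
every `p` with `Re p > 0` and `iλ·ĉ(p) ≠ 1` the Laplace transforms satisfy
`â(p) = b̂(p) / (1 - iλ·ĉ(p))`. -/
theorem volterra_laplace_transform (lam : ℝ) (a b c : ℝ → ℂ)
    (ha_cont : ContinuousOn a (Set.Ici 0))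
    (ha_bdd : ∃ C : ℝ, ∀ t : ℝ, 0 ≤ t → ‖a t‖ ≤ C)
    (hb_meas : AEStronglyMeasurable b (volume : Measure ℝ))
    (hb_bdd : ∃ C : ℝ, ∀ t : ℝ, 0 ≤ t → ‖b t‖ ≤ C)
    (hc_meas : AEStronglyMeasurable c (volume : Measure ℝ))
    (hc_bdd : ∃ C : ℝ, ∀ t : ℝ, 0 ≤ t → ‖c t‖ ≤ C)
    (heq : ∀ t : ℝ, 0 ≤ t →
      (∫ s in (0:ℝ)..t, a s) =
        (∫ s in (0:ℝ)..t, b s) +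
          Complex.I * lam * ∫ s in (0:ℝ)..t, (∫ r in (0:ℝ)..(t - s), c r) * a s) :
    ∀ p : ℂ, 0 < p.re →
      Complex.I * lam * (∫ s in Set.Ioi (0:ℝ), Complex.exp (-(p * s)) * c s) ≠ 1 →
      (∫ s in Set.Ioi (0:ℝ), Complex.exp (-(p * s)) * a s) =
        (∫ s in Set.Ioi (0:ℝ), Complex.exp (-(p * s)) * b s) /
          (1 - Complex.I * lam * ∫ s in Set.Ioi (0:ℝ), Complex.exp (-(p * s)) * c s) := by
  intro p hp (hne : I * lam * laplaceTransform c p ≠ 1)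
  obtain ⟨Ca, hCa⟩ := ha_bdd
  obtain ⟨Cb, hCb⟩ := hb_bdd
  obtain ⟨Cc, hCc⟩ := hc_bdd
  have hIa : LaplaceIntegrable a p := .of_norm_le hp
    ((ha_cont.mono Ioi_subset_Ici_self).aestronglyMeasurable measurableSet_Ioi)
    fun t ht => hCa t ht.le
  have hIb : LaplaceIntegrable b p := .of_norm_le hp hb_meas.restrict fun t ht => hCb t ht.le
  have hIc : LaplaceIntegrable c p := .of_norm_le hp hc_meas.restrict fun t ht => hCc t ht.le
  have hIK := hIc.primitive hp
  have htransformed :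
      laplaceTransform (fun t => ∫ s in 0..t, a s) p =
        laplaceTransform (fun t => ∫ s in 0..t, b s) p + I * lam *
          laplaceTransform (fun t => ∫ s in 0..t, (fun u => ∫ r in 0..u, c r) (t - s) * a s) p := by
    rw [← laplaceTransform_const_mul,
      ← laplaceTransform_add (hIb.primitive hp) ((hIa.posConvolution hIK).const_mul _)]
    exact laplaceTransform_congr fun t ht => heq t ht.le
  rw [laplaceTransform_primitive hp hIa, laplaceTransform_primitive hp hIb,
    laplaceTransform_posConvolution hIa hIK, laplaceTransform_primitive hp hIc] at htransformed
  have hp0 : p ≠ 0 := by rintro rfl; simp at hp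
  change laplaceTransform a p = laplaceTransform b p / (1 - I * lam * laplaceTransform c p)
  rw [eq_div_iff (sub_ne_zero.2 hne.symm)]
  field_simp at htransformed
  linear_combination htransformed
end

section
/- Let 𝓛₀, 𝓛₁, 𝓛₂, 𝓛₃ be bounded operators on a complex Hilbert space such that 2 + 𝓛₃ is invertible. Then the operators ℓ₃ = 2𝓛₃(2 + 𝓛₃)^{−1}, ℓ₁ = 2𝓛₁(2 + 𝓛₃)^{−1}, ℓ₂ = 2(2 + 𝓛₃)^{−1}𝓛₂, ℓ₀ = 𝓛₀ − 𝓛₁(2 + 𝓛₃)^{−1}𝓛₂ form the unique solution of the system 𝓛₀ = ℓ₀ + 𝓛₁ℓ₂/2, 𝓛₁ = ℓ₁ + 𝓛₁ℓ₃/2, 𝓛₂ = ℓ₂ + 𝓛₃ℓ₂/2, 𝓛₃ = ℓ₃ + 𝓛₃ℓ₃/2. (This system expresses the passage, via the Ito multiplication table, from the adapted (Ito) coefficients 𝓛ₖ of a quantum stochastic differential equation to the coefficients ℓₖ of its symmetric (Stratonovich) form.) -/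
/-!
With `R = (2 + 𝓛₃)⁻¹`, the equations for `ℓ₂` and `ℓ₃` read `2𝓛ₖ = (2 + 𝓛₃) ℓₖ`, so they are
solved by left multiplication with `R`; and `R` commutes with `𝓛₃`. Once `ℓ₃ = 2𝓛₃R` is known,
the equation for `ℓ₁` says `ℓ₁ = 𝓛₁ (1 - 𝓛₃R) = 2𝓛₁R`, since `(2 + 𝓛₃) R = 1`; and once
`ℓ₂ = 2R𝓛₂` is known, the equation for `ℓ₀` is solved for `ℓ₀` by subtraction.
-/

section TwoAddInverse

variable {𝕜 A : Type*} [Ring A] {a : A}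

theorem commute_ringInverse_two_add (ha : IsUnit (2 + a)) : Commute a (Ring.inverse (2 + a)) := by
  rw [Ring.inverse_of_isUnit ha]
  exact ((Commute.ofNat_right a 2).add_right (Commute.refl a)).units_inv_right

theorem two_smul_ringInverse_two_add [CommSemiring 𝕜] [Algebra 𝕜 A] (ha : IsUnit (2 + a)) :
    (2 : 𝕜) • Ring.inverse (2 + a) = 1 - a * Ring.inverse (2 + a) := by
  rw [eq_sub_iff_add_eq, Algebra.smul_def, map_ofNat, ← add_mul, Ring.mul_inverse_cancel _ ha]

variable [Field 𝕜] [NeZero (2 : 𝕜)] [Algebra 𝕜 A]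

theorem eq_add_inv_two_smul_mul_iff (ha : IsUnit (2 + a)) (x y : A) :
    y = x + (2 : 𝕜)⁻¹ • (a * x) ↔ x = (2 : 𝕜) • (Ring.inverse (2 + a) * y) := by
  have h2 : (2 : 𝕜) ≠ 0 := two_ne_zero
  calc y = x + (2 : 𝕜)⁻¹ • (a * x)
      ↔ (2 : 𝕜) • y = (2 + a) * x := by
        rw [← smul_right_inj h2, smul_add, smul_inv_smul₀ h2]
        simp only [Algebra.smul_def, map_ofNat, add_mul]
    _ ↔ x = (2 : 𝕜) • (Ring.inverse (2 + a) * y) := by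
        rw [← mul_smul_comm, eq_comm (a := x), Ring.inverse_mul_eq_iff_eq_mul _ _ _ ha, eq_comm]

theorem eq_add_inv_two_smul_mul_two_smul_iff (ha : IsUnit (2 + a)) (b x : A) :
    b = x + (2 : 𝕜)⁻¹ • (b * (2 : 𝕜) • (a * Ring.inverse (2 + a))) ↔
      x = (2 : 𝕜) • (b * Ring.inverse (2 + a)) := by
  rw [mul_smul_comm, inv_smul_smul₀ two_ne_zero, ← mul_smul_comm,
    two_smul_ringInverse_two_add ha, mul_sub, mul_one, ← mul_assoc, eq_sub_iff_add_eq, eq_comm]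

end TwoAddInverse

theorem ito_to_stratonovich_coefficients_general {H : Type*} [NormedAddCommGroup H]
    [InnerProductSpace ℂ H]
    (L0 L1 L2 L3 : H →L[ℂ] H) (hinv : IsUnit ((2 : H →L[ℂ] H) + L3)) :
    ∀ e0 e1 e2 e3 : H →L[ℂ] H,
      (L0 = e0 + ((2:ℂ)⁻¹) • (L1 * e2) ∧
       L1 = e1 + ((2:ℂ)⁻¹) • (L1 * e3) ∧
       L2 = e2 + ((2:ℂ)⁻¹) • (L3 * e2) ∧
       L3 = e3 + ((2:ℂ)⁻¹) • (L3 * e3)) ↔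
      (e3 = (2 : ℂ) • (L3 * Ring.inverse ((2 : H →L[ℂ] H) + L3)) ∧
       e1 = (2 : ℂ) • (L1 * Ring.inverse ((2 : H →L[ℂ] H) + L3)) ∧
       e2 = (2 : ℂ) • (Ring.inverse ((2 : H →L[ℂ] H) + L3) * L2) ∧
       e0 = L0 - L1 * Ring.inverse ((2 : H →L[ℂ] H) + L3) * L2) := by
  intro e0 e1 e2 e3
  have h3 := eq_add_inv_two_smul_mul_iff (𝕜 := ℂ) hinv e3 L3
  rw [← (commute_ringInverse_two_add hinv).eq] at h3
  have h2 := eq_add_inv_two_smul_mul_iff (𝕜 := ℂ) hinv e2 L2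
  have h1 : e3 = (2 : ℂ) • (L3 * Ring.inverse (2 + L3)) →
      (L1 = e1 + (2 : ℂ)⁻¹ • (L1 * e3) ↔ e1 = (2 : ℂ) • (L1 * Ring.inverse (2 + L3))) := by
    rintro rfl
    exact eq_add_inv_two_smul_mul_two_smul_iff hinv L1 e1
  have h0 : e2 = (2 : ℂ) • (Ring.inverse (2 + L3) * L2) →
      (L0 = e0 + (2 : ℂ)⁻¹ • (L1 * e2) ↔ e0 = L0 - L1 * Ring.inverse (2 + L3) * L2) := by
    rintro rfl
    rw [mul_smul_comm, inv_smul_smul₀ two_ne_zero, eq_sub_iff_add_eq, eq_comm, mul_assoc]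
  tauto

/-- Passage from the adapted (Ito) coefficients `𝓛₀,…,𝓛₃` of a QSDE to the coefficients
`ℓ₀,…,ℓ₃` of its symmetric (Stratonovich) form: if `2 + 𝓛₃` is invertible then
`ℓ₃ = 2𝓛₃(2+𝓛₃)⁻¹`, `ℓ₁ = 2𝓛₁(2+𝓛₃)⁻¹`, `ℓ₂ = 2(2+𝓛₃)⁻¹𝓛₂`,
`ℓ₀ = 𝓛₀ − 𝓛₁(2+𝓛₃)⁻¹𝓛₂` form the unique solution of the system
`𝓛₀ = ℓ₀ + 𝓛₁ℓ₂/2`, `𝓛₁ = ℓ₁ + 𝓛₁ℓ₃/2`, `𝓛₂ = ℓ₂ + 𝓛₃ℓ₂/2`, `𝓛₃ = ℓ₃ + 𝓛₃ℓ₃/2`. -/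
theorem ito_to_stratonovich_coefficients {H : Type*} [NormedAddCommGroup H]
    [InnerProductSpace ℂ H] [CompleteSpace H]
    (L0 L1 L2 L3 : H →L[ℂ] H) (hinv : IsUnit ((2 : H →L[ℂ] H) + L3)) :
    ∀ e0 e1 e2 e3 : H →L[ℂ] H,
      (L0 = e0 + ((2:ℂ)⁻¹) • (L1 * e2) ∧
       L1 = e1 + ((2:ℂ)⁻¹) • (L1 * e3) ∧
       L2 = e2 + ((2:ℂ)⁻¹) • (L3 * e2) ∧
       L3 = e3 + ((2:ℂ)⁻¹) • (L3 * e3)) ↔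
      (e3 = (2 : ℂ) • (L3 * Ring.inverse ((2 : H →L[ℂ] H) + L3)) ∧
       e1 = (2 : ℂ) • (L1 * Ring.inverse ((2 : H →L[ℂ] H) + L3)) ∧
       e2 = (2 : ℂ) • (Ring.inverse ((2 : H →L[ℂ] H) + L3) * L2) ∧
       e0 = L0 - L1 * Ring.inverse ((2 : H →L[ℂ] H) + L3) * L2) :=
  ito_to_stratonovich_coefficients_general L0 L1 L2 L3 hinv
end

section
/- Let K be a bounded self-adjoint operator and R a bounded operator on a complex Hilbert space. Set W = (2 + iK)(2 − iK)^{−1}, L = 2i(2 − iK)^{−1}R, and define the Hudson–Parthasarathy coefficients 𝓛₁ = −L*W, 𝓛₂ = L, 𝓛₃ = W − I. Then 2 + 𝓛₃ = I + W is invertible and the symmetric-form coefficients are self-adjoint multiples of the original operators: 2𝓛₃(2 + 𝓛₃)^{−1} = iK, 2𝓛₁(2 + 𝓛₃)^{−1} = iR*, and 2(2 + 𝓛₃)^{−1}𝓛₂ = iR. -/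
open Complex
open scoped Ring

/-! With `A = 2 - iK`, invertible because the spectrum of `K` is real, one has `A* = 2 + iK`,
`W = A* A⁻¹` and `I + W = (A + A*) A⁻¹ = 4 A⁻¹`, so `(2 + 𝓛₃)⁻¹ = A / 4`. Each identity then
follows by cancelling `A⁻¹` against `A`; for `𝓛₁` one also uses
`L* W = -2i R* (A*)⁻¹ A* A⁻¹ = -2i R* A⁻¹`. -/

theorem IsSelfAdjoint.isUnit_algebraMap_sub_I_smul {A : Type*} [CStarAlgebra A] {a : A}
    (ha : IsSelfAdjoint a) {z : ℂ} (hz : z.re ≠ 0) : IsUnit (algebraMap ℂ A z - I • a) := by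
  have hmem : -I * z ∉ spectrum ℂ a := fun h ↦ hz <| by
    simpa using ha.im_eq_zero_of_mem_spectrum h
  have hfactor : algebraMap ℂ A z - I • a = I • (algebraMap ℂ A (-I * z) - a) := by
    rw [Algebra.algebraMap_eq_smul_one, Algebra.algebraMap_eq_smul_one, smul_sub, smul_smul,
      ← mul_assoc]
    simp
  rw [hfactor]
  exact (spectrum.notMem_iff.mp hmem).smul (Units.mk0 I I_ne_zero)

section
variable {A : Type*} [Ring A] [Algebra ℂ A] {x : A}

theorem two_add_mul_inverse_sub_one (hx : IsUnit (2 - x)) :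
    2 + ((2 + x) * (2 - x)⁻¹ʳ - 1) = (4 : ℂ) • (2 - x)⁻¹ʳ := by
  calc 2 + ((2 + x) * (2 - x)⁻¹ʳ - 1) = 1 + (2 + x) * (2 - x)⁻¹ʳ := by
        generalize (2 + x) * (2 - x)⁻¹ʳ = w
        rw [← one_add_one_eq_two]; abel
    _ = (2 - x) * (2 - x)⁻¹ʳ + (2 + x) * (2 - x)⁻¹ʳ := by rw [Ring.mul_inverse_cancel _ hx]
    _ = (4 : ℂ) • (2 - x)⁻¹ʳ := by
        rw [← add_mul, sub_add_add_cancel, Algebra.smul_def, map_ofNat]; norm_num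

theorem isUnit_two_add_mul_inverse_sub_one (hx : IsUnit (2 - x)) :
    IsUnit (2 + ((2 + x) * (2 - x)⁻¹ʳ - 1)) := by
  rw [two_add_mul_inverse_sub_one hx]
  exact hx.ringInverse.smul (Units.mk0 (4 : ℂ) (by norm_num))

theorem inverse_two_add_mul_inverse_sub_one (hx : IsUnit (2 - x)) :
    (2 + ((2 + x) * (2 - x)⁻¹ʳ - 1))⁻¹ʳ = (4⁻¹ : ℂ) • (2 - x) := by
  rw [← mul_one (_⁻¹ʳ),
    Ring.inverse_mul_eq_iff_eq_mul _ _ _ (isUnit_two_add_mul_inverse_sub_one hx),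
    two_add_mul_inverse_sub_one hx, smul_mul_smul_comm, Ring.inverse_mul_cancel _ hx]
  norm_num

theorem mul_inverse_sub_one_mul (hx : IsUnit (2 - x)) :
    ((2 + x) * (2 - x)⁻¹ʳ - 1) * (2 - x) = (2 : ℂ) • x := by
  rw [sub_mul, Ring.inverse_mul_cancel_right _ _ hx, one_mul, two_smul]
  noncomm_ring
end

theorem star_inverse_mul_mul_mul_inverse {A : Type*} [Ring A] [StarRing A] {x : A}
    (hx : IsUnit (2 - x)) (hsx : star x = -x) (r : A) :
    star ((2 - x)⁻¹ʳ * r) * ((2 + x) * (2 - x)⁻¹ʳ) = star r * (2 - x)⁻¹ʳ := by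
  have hstar : star (2 - x) = 2 + x := by rw [star_sub, star_ofNat, hsx, sub_neg_eq_add]
  have hunit : IsUnit (2 + x) := hstar ▸ hx.star
  rw [star_mul, ← Ring.inverse_star, hstar, mul_assoc, Ring.inverse_mul_cancel_left _ _ hunit]

/-- For `K` bounded self-adjoint and `R` bounded, with `W = (2+iK)(2-iK)⁻¹`,
`L = 2i(2-iK)⁻¹R` and Hudson–Parthasarathy coefficients `𝓛₁ = -L*W`, `𝓛₂ = L`,
`𝓛₃ = W - I`: the operator `2 + 𝓛₃ = I + W` is invertible and
`2𝓛₃(2+𝓛₃)⁻¹ = iK`, `2𝓛₁(2+𝓛₃)⁻¹ = iR*`, `2(2+𝓛₃)⁻¹𝓛₂ = iR`. -/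
theorem hp_coefficients_symmetric_form {H : Type*} [NormedAddCommGroup H]
    [InnerProductSpace ℂ H] [CompleteSpace H]
    (K R : H →L[ℂ] H) (hK : IsSelfAdjoint K) :
    let W : H →L[ℂ] H :=
      ((2 : H →L[ℂ] H) + Complex.I • K) * Ring.inverse ((2 : H →L[ℂ] H) - Complex.I • K)
    let L : H →L[ℂ] H := (2 * Complex.I) • (Ring.inverse ((2 : H →L[ℂ] H) - Complex.I • K) * R)
    let L1 : H →L[ℂ] H := -(ContinuousLinearMap.adjoint L * W)
    let L2 : H →L[ℂ] H := L
    let L3 : H →L[ℂ] H := W - 1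
    IsUnit ((2 : H →L[ℂ] H) + L3) ∧
    (2 : ℂ) • (L3 * Ring.inverse ((2 : H →L[ℂ] H) + L3)) = Complex.I • K ∧
    (2 : ℂ) • (L1 * Ring.inverse ((2 : H →L[ℂ] H) + L3)) =
      Complex.I • ContinuousLinearMap.adjoint R ∧
    (2 : ℂ) • (Ring.inverse ((2 : H →L[ℂ] H) + L3) * L2) = Complex.I • R := by
  intro W L L1 L2 L3
  have hA : IsUnit ((2 : H →L[ℂ] H) - I • K) := by
    have := hK.isUnit_algebraMap_sub_I_smul (A := H →L[ℂ] H) (z := 2) (by norm_num)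
    rwa [map_ofNat] at this
  have hinv : (2 + L3)⁻¹ʳ = (4⁻¹ : ℂ) • (2 - I • K) := inverse_two_add_mul_inverse_sub_one hA
  have hskew : star (I • K) = -(I • K) := hK.smul_mem_skewAdjoint conj_I
  refine ⟨isUnit_two_add_mul_inverse_sub_one hA, ?_, ?_, ?_⟩ <;> rw [hinv]
  · rw [mul_smul_comm, mul_inverse_sub_one_mul hA, smul_smul, smul_smul]
    norm_num
  · simp only [L1, L, W, ← ContinuousLinearMap.star_eq_adjoint, star_smul, smul_mul_assoc,
      star_inverse_mul_mul_mul_inverse hA hskew, mul_smul_comm,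
      Ring.inverse_mul_cancel_right _ _ hA, smul_smul, ← neg_smul]
    congr 1
    simp only [Complex.star_def, map_mul, map_ofNat, conj_I]
    ring
  · simp only [L2, L, smul_mul_assoc, mul_smul_comm, smul_smul, ← mul_assoc,
      Ring.mul_inverse_cancel _ hA, one_mul]
    congr 1
    ring
end
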